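/- arXiv:math/0610547 — 13 statements merged into one kernel-verified Lean document; each statement's English description precedes it below -/
import Mathlib

section
/- If X is an almost transitive Banach space (i.e., for every x in the unit sphere the orbit of x under surjective linear isometries is dense in the unit sphere), then X is asymptotically transitive: for every x, y in the unit sphere and every ε > 0 there is a linear automorphism T of X with T(x) = y, ‖T‖ ≤ 1 + ε and ‖T⁻¹‖ ≤ 1 + ε. -/
theorem stmt_0 {X : Type*} [NormedAddCommGroup X] [NormedSpace ℝ X] [CompleteSpace X]
    (hAT : ∀ x y : X, ‖x‖ = 1 → ‖y‖ = 1 → ∀ ε > 0, ∃ T : X ≃ₗᵢ[ℝ] X, ‖T x - y‖ < ε) :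
    ∀ x y : X, ‖x‖ = 1 → ‖y‖ = 1 → ∀ ε > 0, ∃ T : X ≃L[ℝ] X,
      T x = y ∧ ‖(T : X →L[ℝ] X)‖ ≤ 1 + ε ∧ ‖(T.symm : X →L[ℝ] X)‖ ≤ 1 + ε := by
  intro x y hx hy ε hε
  have hXnt : Nontrivial X := ⟨x, 0, by intro h; simp [h] at hx⟩
  set δ : ℝ := ε / (1 + ε) with hδdef
  have hδpos : 0 < δ := div_pos hε (by linarith)
  have hδlt1 : δ < 1 := by
    rw [div_lt_one (by linarith)]; linarith
  have hδε : δ ≤ ε := by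
    rw [div_le_iff₀ (by linarith)]; nlinarith
  obtain ⟨U, hU⟩ := hAT x y hx hy δ hδpos
  have hUx : ‖U x‖ = 1 := by rw [U.norm_map, hx]
  have hUx0 : U x ≠ 0 := by intro h; rw [h, norm_zero] at hUx; norm_num at hUx
  obtain ⟨f, hf1, hfx⟩ := exists_dual_vector ℝ (U x) (norm_ne_zero_iff.mpr hUx0)
  set v : X := y - U x with hvdef
  have hv : ‖v‖ < δ := by rw [hvdef, ← norm_neg]; simpa using hU
  set t : X →L[ℝ] X := -(f.smulRight v) with htdef
  have hft : ‖t‖ < δ := by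
    rw [htdef, norm_neg, ContinuousLinearMap.norm_smulRight_apply, hf1, one_mul]; exact hv
  have ht1 : ‖t‖ < 1 := lt_trans hft hδlt1
  set u : (X →L[ℝ] X)ˣ := Units.oneSub t ht1 with hudef
  set E : X ≃L[ℝ] X := ContinuousLinearEquiv.unitsEquiv ℝ X u with hEdef
  refine ⟨U.toContinuousLinearEquiv.trans E, ?_, ?_, ?_⟩
  · show E (U x) = y
    have : E (U x) = U x - t (U x) := rfl
    rw [this, htdef]
    simp only [ContinuousLinearMap.neg_apply, ContinuousLinearMap.smulRight_apply, hfx, hUx]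
    simp [hvdef]
  · refine ContinuousLinearMap.opNorm_le_bound _ (by positivity) fun z => ?_
    have : (U.toContinuousLinearEquiv.trans E : X →L[ℝ] X) z = (u : X →L[ℝ] X) (U z) := rfl
    rw [this]
    calc ‖(u : X →L[ℝ] X) (U z)‖ ≤ ‖(u : X →L[ℝ] X)‖ * ‖U z‖ :=
          ContinuousLinearMap.le_opNorm _ _
      _ ≤ (1 + ε) * ‖z‖ := by
          rw [U.norm_map]
          apply mul_le_mul_of_nonneg_right _ (norm_nonneg z)
          have : ‖(u : X →L[ℝ] X)‖ = ‖(1 : X →L[ℝ] X) - t‖ := rfl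
          rw [this]
          calc ‖(1 : X →L[ℝ] X) - t‖ ≤ ‖(1 : X →L[ℝ] X)‖ + ‖t‖ := norm_sub_le _ _
            _ ≤ 1 + ε := by rw [norm_one]; linarith [lt_of_lt_of_le hft hδε]
  · refine ContinuousLinearMap.opNorm_le_bound _ (by positivity) fun z => ?_
    have hrep : ((U.toContinuousLinearEquiv.trans E).symm : X →L[ℝ] X) z
        = U.symm (((u⁻¹ : (X →L[ℝ] X)ˣ) : X →L[ℝ] X) z) := rfl
    rw [hrep, LinearIsometryEquiv.norm_map]
    have hinv : ‖((u⁻¹ : (X →L[ℝ] X)ˣ) : X →L[ℝ] X)‖ ≤ (1 - ‖t‖)⁻¹ := by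
      have : ((u⁻¹ : (X →L[ℝ] X)ˣ) : X →L[ℝ] X) = ∑' n : ℕ, t ^ n := rfl
      rw [this]
      have := tsum_geometric_le_of_norm_lt_one t ht1
      rw [norm_one] at this
      linarith
    have hbound : (1 - ‖t‖)⁻¹ ≤ 1 + ε := by
      rw [inv_le_comm₀ (by linarith) (by linarith)]
      have : (1 : ℝ) - δ ≤ 1 - ‖t‖ := by linarith
      refine le_trans ?_ this
      rw [hδdef, le_sub_iff_add_le, inv_eq_one_div, ← add_div, div_le_one (by linarith)]
    calc ‖((u⁻¹ : (X →L[ℝ] X)ˣ) : X →L[ℝ] X) z‖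
        ≤ ‖((u⁻¹ : (X →L[ℝ] X)ˣ) : X →L[ℝ] X)‖ * ‖z‖ := ContinuousLinearMap.le_opNorm _ _
      _ ≤ (1 + ε) * ‖z‖ :=
          mul_le_mul_of_nonneg_right (le_trans hinv hbound) (norm_nonneg z)
end

section
/- For every x in the unit sphere of a Banach space X, the generalized orbit O(x) = ⋂_{ε>0} {T(x) : T a linear automorphism of X with max(‖T‖,‖T⁻¹‖) ≤ 1+ε} is norm closed in X. -/
set_option maxHeartbeats 1000000 in
theorem stmt_1 {X : Type*} [NormedAddCommGroup X] [NormedSpace ℝ X] [CompleteSpace X]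
    (x : X) (hx : ‖x‖ = 1) :
    IsClosed {y : X | ∀ ε > 0, ∃ T : X ≃L[ℝ] X,
      T x = y ∧ ‖(T : X →L[ℝ] X)‖ ≤ 1 + ε ∧ ‖(T.symm : X →L[ℝ] X)‖ ≤ 1 + ε} := by
  refine isClosed_of_closure_subset fun y hy => ?_
  intro ε hε
  set c : ℝ := min ε 1 with hc
  have hc0 : 0 < c := lt_min hε one_pos
  have hcε : c ≤ ε := min_le_left _ _
  have hc1 : c ≤ 1 := min_le_right _ _
  rw [Metric.mem_closure_iff] at hy
  obtain ⟨y', hy'S, hdist⟩ := hy (c / 16) (by positivity)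
  obtain ⟨T', hT'x, hT'n, hT'i⟩ := hy'S (c / 8) (by positivity)
  -- y' is bounded below in norm
  have hxy' : x = T'.symm y' := by rw [← hT'x]; simp
  have h1y' : 1 ≤ (1 + c / 8) * ‖y'‖ := by
    calc 1 = ‖x‖ := hx.symm
    _ = ‖(T'.symm : X →L[ℝ] X) y'‖ := by rw [hxy']; rfl
    _ ≤ ‖(T'.symm : X →L[ℝ] X)‖ * ‖y'‖ := (T'.symm : X →L[ℝ] X).le_opNorm y'
    _ ≤ (1 + c / 8) * ‖y'‖ := by
        apply mul_le_mul_of_nonneg_right hT'i (norm_nonneg _)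
  have hy'0 : y' ≠ 0 := by
    intro h
    rw [h, norm_zero, mul_zero] at h1y'
    linarith
  have hy'pos : 0 < ‖y'‖ := norm_pos_iff.mpr hy'0
  obtain ⟨g, hg1, hgy'⟩ := exists_dual_vector ℝ y' hy'pos.ne'
  set f : X →L[ℝ] ℝ := ‖y'‖⁻¹ • g with hf
  have hfy' : f y' = 1 := by
    simp [hf, hgy', inv_mul_cancel₀ (ne_of_gt hy'pos)]
  have hfn : ‖f‖ ≤ 1 + c / 8 := by
    have h1 : ‖f‖ ≤ ‖(‖y'‖⁻¹ : ℝ)‖ * ‖g‖ := g.opNorm_smul_le ‖y'‖⁻¹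
    rw [hg1, norm_inv, Real.norm_eq_abs, abs_of_pos hy'pos, mul_one] at h1
    refine h1.trans ?_
    rw [inv_le_iff_one_le_mul₀ hy'pos]
    linarith [h1y']
  set z : X := y - y' with hz
  have hzn : ‖z‖ < c / 16 := by
    rw [hz, ← dist_eq_norm]; exact hdist
  set A : X →L[ℝ] X := f.smulRight z with hA
  have hAn : ‖A‖ ≤ (1 + c / 8) * (c / 16) := by
    rw [hA, ContinuousLinearMap.norm_smulRight_apply]
    exact mul_le_mul hfn hzn.le (norm_nonneg _) (by linarith)
  have hr1 : (1 + c / 8) * (c / 16) < 1 := by nlinarith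
  have hAn1 : ‖(-A : X →L[ℝ] X)‖ < 1 := by
    rw [norm_neg]; exact lt_of_le_of_lt hAn hr1
  set u : (X →L[ℝ] X)ˣ := Units.oneSub (-A) hAn1 with hu
  set E : X ≃L[ℝ] X := ContinuousLinearEquiv.ofUnit u with hE
  have hEval : (E : X →L[ℝ] X) = 1 + A := by
    have : (E : X →L[ℝ] X) = 1 - -A := ContinuousLinearMap.ext fun v => rfl
    rw [this, sub_neg_eq_add]
  have hEsym : (E.symm : X →L[ℝ] X) = ∑' n : ℕ, (-A) ^ n := rfl
  have hEn : ‖(E : X →L[ℝ] X)‖ ≤ 1 + (1 + c / 8) * (c / 16) := by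
    rw [hEval]
    calc ‖(1 : X →L[ℝ] X) + A‖ ≤ ‖(1 : X →L[ℝ] X)‖ + ‖A‖ := norm_add_le _ _
    _ ≤ 1 + (1 + c / 8) * (c / 16) := by
        have h1 : ‖(1 : X →L[ℝ] X)‖ ≤ 1 := ContinuousLinearMap.norm_id_le
        linarith
  have hEsn : ‖(E.symm : X →L[ℝ] X)‖ ≤ (1 - (1 + c / 8) * (c / 16))⁻¹ := by
    rw [hEsym]
    have h1 : ‖(1 : X →L[ℝ] X)‖ ≤ 1 := ContinuousLinearMap.norm_id_le
    have := tsum_geometric_le_of_norm_lt_one (-A) hAn1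
    have hmono : (1 - ‖(-A : X →L[ℝ] X)‖)⁻¹ ≤ (1 - (1 + c / 8) * (c / 16))⁻¹ := by
      apply inv_anti₀ (by linarith)
      rw [norm_neg]; linarith
    linarith
  refine ⟨T'.trans E, ?_, ?_, ?_⟩
  · show E (T' x) = y
    rw [hT'x]
    have : E y' = (1 + A) y' := by rw [← hEval]; rfl
    rw [this]
    simp only [ContinuousLinearMap.add_apply, ContinuousLinearMap.one_apply, hA,
      ContinuousLinearMap.smulRight_apply, hfy', one_smul, hz]
    abel
  · have hcoe : ((T'.trans E : X ≃L[ℝ] X) : X →L[ℝ] X)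
        = (E : X →L[ℝ] X).comp (T' : X →L[ℝ] X) := ContinuousLinearMap.ext fun v => rfl
    rw [hcoe]
    calc ‖(E : X →L[ℝ] X).comp (T' : X →L[ℝ] X)‖
        ≤ ‖(E : X →L[ℝ] X)‖ * ‖(T' : X →L[ℝ] X)‖ := ContinuousLinearMap.opNorm_comp_le _ _
    _ ≤ (1 + (1 + c / 8) * (c / 16)) * (1 + c / 8) := by
        apply mul_le_mul hEn hT'n (norm_nonneg _) (by nlinarith)
    _ ≤ 1 + ε := by nlinarith
  · have hcoe : (((T'.trans E).symm : X ≃L[ℝ] X) : X →L[ℝ] X)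
        = (T'.symm : X →L[ℝ] X).comp (E.symm : X →L[ℝ] X) := ContinuousLinearMap.ext fun v => rfl
    rw [hcoe]
    have hEs0 : 0 ≤ ‖(E.symm : X →L[ℝ] X)‖ := norm_nonneg _
    calc ‖(T'.symm : X →L[ℝ] X).comp (E.symm : X →L[ℝ] X)‖
        ≤ ‖(T'.symm : X →L[ℝ] X)‖ * ‖(E.symm : X →L[ℝ] X)‖ :=
          ContinuousLinearMap.opNorm_comp_le _ _
    _ ≤ (1 + c / 8) * (1 - (1 + c / 8) * (c / 16))⁻¹ := mul_le_mul hT'i hEsn hEs0 (by linarith)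
    _ ≤ 1 + ε := by
        have hpos : (0:ℝ) < 1 - (1 + c / 8) * (c / 16) := by nlinarith
        rw [← div_eq_mul_inv, div_le_iff₀ hpos]
        nlinarith [mul_le_mul_of_nonneg_right (show (1:ℝ) + c ≤ 1 + ε by linarith) hpos.le,
          sq_nonneg c]
end

section
/- If Banach spaces X and Y are almost isometric (Banach–Mazur distance 1) and X is almost transitive, then Y is asymptotically transitive. -/
lemma aux_inv_norm' {R : Type*} [NormedRing R] [NormOneClass R] (w : Rˣ) (t : R)
    (hw : (w : R) = 1 - t) : ‖((w⁻¹ : Rˣ) : R)‖ * (1 - ‖t‖) ≤ 1 := by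
  set i : R := ((w⁻¹ : Rˣ) : R) with hi
  have h0 : (1 - t) * i = 1 := by rw [← hw]; exact w.mul_inv
  rw [sub_mul, one_mul] at h0
  have h1 : i = 1 + t * i := eq_add_of_sub_eq h0
  have h2 : ‖i‖ ≤ 1 + ‖t‖ * ‖i‖ := by
    calc ‖i‖ = ‖1 + t * i‖ := by rw [← h1]
      _ ≤ ‖(1 : R)‖ + ‖t * i‖ := norm_add_le _ _
      _ ≤ 1 + ‖t‖ * ‖i‖ := by rw [norm_one]; exact add_le_add le_rfl (norm_mul_le _ _)
  nlinarith [norm_nonneg t, norm_nonneg i]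

set_option maxHeartbeats 2000000 in
theorem stmt_2 {X Y : Type*} [NormedAddCommGroup X] [NormedSpace ℝ X] [CompleteSpace X]
    [NormedAddCommGroup Y] [NormedSpace ℝ Y] [CompleteSpace Y]
    (hAI : ∀ ε > 0, ∃ T : X ≃L[ℝ] Y,
      ‖(T : X →L[ℝ] Y)‖ * ‖(T.symm : Y →L[ℝ] X)‖ ≤ 1 + ε)
    (hAT : ∀ x y : X, ‖x‖ = 1 → ‖y‖ = 1 → ∀ ε > 0, ∃ T : X ≃ₗᵢ[ℝ] X, ‖T x - y‖ < ε) :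
    ∀ x y : Y, ‖x‖ = 1 → ‖y‖ = 1 → ∀ ε > 0, ∃ T : Y ≃L[ℝ] Y,
      T x = y ∧ ‖(T : Y →L[ℝ] Y)‖ ≤ 1 + ε ∧ ‖(T.symm : Y →L[ℝ] Y)‖ ≤ 1 + ε := by
  intro x y hx hy ε hε
  have hxne : x ≠ 0 := by intro h; rw [h, norm_zero] at hx; norm_num at hx
  haveI : Nontrivial Y := ⟨x, 0, hxne⟩
  set δ : ℝ := min ε 1 / 100 with hδdef
  have hmin : 0 < min ε 1 := lt_min hε one_pos
  have hδpos : 0 < δ := by rw [hδdef]; positivity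
  have hδε : 100 * δ ≤ ε := by rw [hδdef]; have := min_le_left ε 1; linarith
  have hδ1 : 100 * δ ≤ 1 := by rw [hδdef]; have := min_le_right ε 1; linarith
  obtain ⟨T, hT⟩ := hAI δ hδpos
  set a := ‖(T : X →L[ℝ] Y)‖ with ha
  set b := ‖(T.symm : Y →L[ℝ] X)‖ with hb
  set u := T.symm x with hu
  set v := T.symm y with hv
  have hTu : T u = x := T.apply_symm_apply x
  have hTv : T v = y := T.apply_symm_apply y
  have hTle : ∀ w : X, ‖T w‖ ≤ a * ‖w‖ := fun w => by
    simpa using (T : X →L[ℝ] Y).le_opNorm w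
  have hSle : ∀ w : Y, ‖T.symm w‖ ≤ b * ‖w‖ := fun w => by
    simpa using (T.symm : Y →L[ℝ] X).le_opNorm w
  have hub : ‖u‖ ≤ b := by have := hSle x; rwa [hx, mul_one] at this
  have hvb : ‖v‖ ≤ b := by have := hSle y; rwa [hy, mul_one] at this
  have hau : 1 ≤ a * ‖u‖ := by have := hTle u; rw [hTu, hx] at this; linarith
  have hav : 1 ≤ a * ‖v‖ := by have := hTle v; rw [hTv, hy] at this; linarith
  have hune : u ≠ 0 := by
    intro h; rw [h, norm_zero, mul_zero] at hau; linarith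
  have hvne : v ≠ 0 := by
    intro h; rw [h, norm_zero, mul_zero] at hav; linarith
  have hupos : 0 < ‖u‖ := norm_pos_iff.mpr hune
  have hvpos : 0 < ‖v‖ := norm_pos_iff.mpr hvne
  have hapos : 0 < a := by nlinarith
  have hbpos : 0 < b := lt_of_lt_of_le hupos hub
  have hau' : a * ‖u‖ ≤ 1 + δ :=
    le_trans (mul_le_mul_of_nonneg_left hub hapos.le) hT
  have hav' : a * ‖v‖ ≤ 1 + δ :=
    le_trans (mul_le_mul_of_nonneg_left hvb hapos.le) hT
  obtain ⟨R, hR⟩ := hAT (‖u‖⁻¹ • u) (‖v‖⁻¹ • v) (norm_smul_inv_norm hune)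
    (norm_smul_inv_norm hvne) δ hδpos
  set S : Y ≃L[ℝ] Y := (T.symm.trans R.toContinuousLinearEquiv).trans T with hS
  have hSx : S x = T (R u) := by
    rw [hS]; simp; rfl
  set z := T (R u) with hz
  have habs : a * |‖u‖ - ‖v‖| ≤ δ := by
    rcases abs_cases (‖u‖ - ‖v‖) with ⟨h, _⟩ | ⟨h, _⟩
    · rw [h, mul_sub]; linarith
    · rw [h, mul_neg, mul_sub]; linarith
  have hkey : R u - v = ‖u‖ • (R (‖u‖⁻¹ • u) - ‖v‖⁻¹ • v) + (‖u‖ - ‖v‖) • (‖v‖⁻¹ • v) := by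
    have h1 : ‖u‖ • (‖u‖⁻¹ • u) = u := by
      rw [smul_smul, mul_inv_cancel₀ (ne_of_gt hupos), one_smul]
    have h2 : ‖v‖ • (‖v‖⁻¹ • v) = v := by
      rw [smul_smul, mul_inv_cancel₀ (ne_of_gt hvpos), one_smul]
    have h3 : ‖u‖ • R (‖u‖⁻¹ • u) = R u := by rw [← map_smul, h1]
    rw [smul_sub, sub_smul, h3, h2]
    abel
  have hRuv : ‖R u - v‖ ≤ ‖u‖ * δ + |‖u‖ - ‖v‖| := by
    have e1 : ‖‖u‖ • (R (‖u‖⁻¹ • u) - ‖v‖⁻¹ • v)‖ ≤ ‖u‖ * δ := by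
      rw [norm_smul, Real.norm_eq_abs, abs_of_nonneg (norm_nonneg u)]
      exact mul_le_mul_of_nonneg_left hR.le (norm_nonneg u)
    have hv1 : ‖(‖v‖⁻¹ : ℝ) • v‖ = 1 := by
      rw [norm_smul, Real.norm_eq_abs, abs_of_nonneg (inv_nonneg.mpr (norm_nonneg v)),
        inv_mul_cancel₀ (ne_of_gt hvpos)]
    have e2 : ‖(‖u‖ - ‖v‖) • ((‖v‖ : ℝ)⁻¹ • v)‖ = |‖u‖ - ‖v‖| := by
      rw [norm_smul, Real.norm_eq_abs, hv1, mul_one]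
    rw [hkey]
    calc ‖_ + _‖ ≤ ‖‖u‖ • (R (‖u‖⁻¹ • u) - ‖v‖⁻¹ • v)‖ + ‖(‖u‖ - ‖v‖) • ((‖v‖ : ℝ)⁻¹ • v)‖ :=
          norm_add_le _ _
      _ ≤ ‖u‖ * δ + |‖u‖ - ‖v‖| := by rw [e2]; linarith
  have hzy : ‖z - y‖ ≤ 3 * δ := by
    have hez : z - y = T (R u - v) := by rw [map_sub, hTv]
    rw [hez]
    have h4 := hTle (R u - v)
    have h5 := mul_le_mul_of_nonneg_left hRuv hapos.le
    nlinarith [mul_le_mul_of_nonneg_right hau' hδpos.le, habs, hδ1, hδpos]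
  have hznorm : (97 : ℝ)/100 ≤ ‖z‖ := by
    have h := abs_norm_sub_norm_le y z
    rw [norm_sub_rev] at h
    have h2 : ‖y‖ - ‖z‖ ≤ 3 * δ := le_trans (le_trans (le_abs_self _) h) hzy
    rw [hy] at h2
    linarith
  have hzne : z ≠ 0 := by
    intro h; rw [h, norm_zero] at hznorm; linarith
  obtain ⟨g, hg1, hgz0⟩ := exists_dual_vector ℝ z (norm_ne_zero_iff.mpr hzne)
  have hgz : g z = ‖z‖ := by exact_mod_cast hgz0
  set t : Y →L[ℝ] Y := -((‖z‖⁻¹ : ℝ) • ContinuousLinearMap.smulRight g (y - z)) with htdef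
  have htnorm : ‖t‖ ≤ 4 * δ := by
    have e0 : ‖t‖ ≤ ‖z‖⁻¹ * ‖y - z‖ := by
      rw [htdef, norm_neg]
      calc ‖‖z‖⁻¹ • g.smulRight (y - z)‖ ≤ ‖(‖z‖⁻¹ : ℝ)‖ * ‖g.smulRight (y - z)‖ :=
            ContinuousLinearMap.opNorm_smul_le _ _
        _ = ‖z‖⁻¹ * ‖y - z‖ := by
            rw [ContinuousLinearMap.norm_smulRight_apply, hg1, one_mul, Real.norm_eq_abs,
              abs_of_nonneg (inv_nonneg.mpr (norm_nonneg z))]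
    rw [norm_sub_rev] at e0
    have hinv : ‖z‖⁻¹ ≤ 100/97 := by
      rw [inv_le_comm₀ (by linarith : (0:ℝ) < ‖z‖) (by norm_num)]
      linarith
    nlinarith [norm_nonneg (z - y), hδpos, e0]
  have ht1 : ‖t‖ < 1 := by linarith
  set w : (Y →L[ℝ] Y)ˣ := Units.oneSub t ht1 with hw
  have hwval : (w : Y →L[ℝ] Y) = 1 - t := rfl
  have hAz : (w : Y →L[ℝ] Y) z = y := by
    have htz : t z = -(y - z) := by
      rw [htdef]
      simp only [ContinuousLinearMap.neg_apply, ContinuousLinearMap.smul_apply,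
        ContinuousLinearMap.smulRight_apply, hgz, neg_inj]
      rw [smul_smul, inv_mul_cancel₀ (norm_ne_zero_iff.mpr hzne), one_smul]
    calc (w : Y →L[ℝ] Y) z = (1 - t) z := by rw [hwval]
      _ = z - t z := by rw [ContinuousLinearMap.sub_apply, ContinuousLinearMap.one_apply]
      _ = y := by rw [htz]; abel
  have hwinv := aux_inv_norm' w t hwval
  have hSp : ∀ p : Y, ‖S p‖ ≤ (1 + δ) * ‖p‖ := fun p => by
    have h1 : S p = T (R (T.symm p)) := by rw [hS]; simp
    rw [h1]
    calc ‖T (R (T.symm p))‖ ≤ a * ‖R (T.symm p)‖ := hTle _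
      _ = a * ‖T.symm p‖ := by rw [R.norm_map]
      _ ≤ a * (b * ‖p‖) := mul_le_mul_of_nonneg_left (hSle p) hapos.le
      _ ≤ (1 + δ) * ‖p‖ := by nlinarith [norm_nonneg p]
  have hSip : ∀ p : Y, ‖S.symm p‖ ≤ (1 + δ) * ‖p‖ := fun p => by
    have h1 : S.symm p = T (R.symm (T.symm p)) := by
      rw [hS]; simp only [ContinuousLinearEquiv.symm_trans_apply,
        ContinuousLinearEquiv.symm_symm]
      rfl
    rw [h1]
    calc ‖T (R.symm (T.symm p))‖ ≤ a * ‖R.symm (T.symm p)‖ := hTle _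
      _ = a * ‖T.symm p‖ := by rw [R.symm.norm_map]
      _ ≤ a * (b * ‖p‖) := mul_le_mul_of_nonneg_left (hSle p) hapos.le
      _ ≤ (1 + δ) * ‖p‖ := by nlinarith [norm_nonneg p]
  have hwn : ‖(w : Y →L[ℝ] Y)‖ ≤ 1 + ‖t‖ := by
    rw [hwval]
    calc ‖(1 : Y →L[ℝ] Y) - t‖ ≤ ‖(1 : Y →L[ℝ] Y)‖ + ‖t‖ := norm_sub_le _ _
      _ = 1 + ‖t‖ := by rw [norm_one]
  set i : Y →L[ℝ] Y := ((w⁻¹ : (Y →L[ℝ] Y)ˣ) : Y →L[ℝ] Y) with hidef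
  have hi2 : ‖i‖ ≤ 1 + 8 * δ := by
    have h0 := norm_nonneg i
    have h2 : ‖i‖ ≤ 2 := by nlinarith [htnorm, hδ1]
    nlinarith [htnorm, hδ1, norm_nonneg t]
  refine ⟨S.trans (ContinuousLinearEquiv.ofUnit w), ?_, ?_, ?_⟩
  · show (ContinuousLinearEquiv.ofUnit w) (S x) = y
    rw [hSx]
    exact hAz
  · apply ContinuousLinearMap.opNorm_le_bound _ (by linarith)
    intro p
    have h1 : ((S.trans (ContinuousLinearEquiv.ofUnit w)) : Y →L[ℝ] Y) p
        = (w : Y →L[ℝ] Y) (S p) := rfl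
    rw [h1]
    calc ‖(w : Y →L[ℝ] Y) (S p)‖ ≤ ‖(w : Y →L[ℝ] Y)‖ * ‖S p‖ :=
          ContinuousLinearMap.le_opNorm _ _
      _ ≤ (1 + ‖t‖) * ((1 + δ) * ‖p‖) :=
          mul_le_mul hwn (hSp p) (norm_nonneg _) (by positivity)
      _ = ((1 + ‖t‖) * (1 + δ)) * ‖p‖ := by ring
      _ ≤ (1 + ε) * ‖p‖ := by
          have hc1 : (1 + ‖t‖) * (1 + δ) ≤ 1 + ε := by
            nlinarith [htnorm, hδpos, hδε, hδ1, norm_nonneg t,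
              mul_le_mul_of_nonneg_left htnorm hδpos.le,
              mul_le_mul_of_nonneg_left hδ1 hδpos.le]
          exact mul_le_mul_of_nonneg_right hc1 (norm_nonneg p)
  · apply ContinuousLinearMap.opNorm_le_bound _ (by linarith)
    intro p
    have h1 : (((S.trans (ContinuousLinearEquiv.ofUnit w)).symm) : Y →L[ℝ] Y) p
        = S.symm (i p) := rfl
    rw [h1]
    calc ‖S.symm (i p)‖
        ≤ (1 + δ) * ‖i p‖ := hSip _
      _ ≤ (1 + δ) * (‖i‖ * ‖p‖) :=
          mul_le_mul_of_nonneg_left (ContinuousLinearMap.le_opNorm _ _) (by linarith)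
      _ = ((1 + δ) * ‖i‖) * ‖p‖ := by ring
      _ ≤ (1 + ε) * ‖p‖ := by
          have hc2 : (1 + δ) * ‖i‖ ≤ 1 + ε := by
            nlinarith [hi2, hδpos, hδε, hδ1, norm_nonneg i,
              mul_le_mul_of_nonneg_left hi2 hδpos.le,
              mul_le_mul_of_nonneg_left hδ1 hδpos.le]
          exact mul_le_mul_of_nonneg_right hc2 (norm_nonneg p)
end

section
/- In L^∞(0,1), the characteristic function of [0,1/2] is not in the generalized orbit of the constant function 1; in particular L^∞(0,1) is not asymptotically transitive. -/
/-!
Take `y = χ_{(1/2,1)}`. Then `‖χ_{[0,1/2]} ± y‖ ≤ 1` while `‖y‖ = 1`, i.e. `χ_{[0,1/2]}` is the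
midpoint of a segment of length `2` inside the unit ball. Around `𝟙` there is no such segment:
`|1 + t| ≤ b` and `|1 - t| ≤ b` force `|t| ≤ b - 1`. If `T 𝟙 = χ_{[0,1/2]}` with
`‖T‖, ‖T⁻¹‖ ≤ b`, then `z = T⁻¹ y` satisfies `‖𝟙 ± z‖ ≤ b`, hence `‖z‖ ≤ b - 1`, and
`1 = ‖T z‖ ≤ b (b - 1)`, which fails for `b = 3/2`.
-/

open MeasureTheory

/-- The measure of `(0,1)` giving the space `L^∞(0,1)`. -/
noncomputable def mu01 : Measure ℝ := volume.restrict (Set.Ioo (0 : ℝ) 1)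

/-- The constant function `1` in `L^∞(0,1)`. -/
noncomputable def oneLinfty : Lp ℝ ⊤ mu01 :=
  indicatorConstLp ⊤ MeasurableSet.univ
    (by
      simp only [mu01, Measure.restrict_apply_univ]
      simp) (1 : ℝ)

/-- The characteristic function of `[0, 1/2]` in `L^∞(0,1)`. -/
noncomputable def chiHalf : Lp ℝ ⊤ mu01 :=
  indicatorConstLp ⊤ measurableSet_Icc
    (by
      refine ne_top_of_le_ne_top (b := volume (Set.Icc (0:ℝ) (1/2))) ?_
        (Measure.restrict_apply_le _ _)
      simp [Real.volume_Icc]) (1 : ℝ)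

theorem ContinuousLinearEquiv.one_le_mul_sub_one_of_norm_apply_add_le
    {𝕜 E F : Type*} [NontriviallyNormedField 𝕜]
    [NormedAddCommGroup E] [NormedSpace 𝕜 E] [NormedAddCommGroup F] [NormedSpace 𝕜 F]
    (T : E ≃L[𝕜] F) {u : E} {y : F} {b : ℝ}
    (hT : ‖(T : E →L[𝕜] F)‖ ≤ b) (hT_symm : ‖(T.symm : F →L[𝕜] E)‖ ≤ b)
    (hu : ∀ z, ‖u + z‖ ≤ b → ‖u - z‖ ≤ b → ‖z‖ ≤ b - 1)
    (hy : ‖y‖ = 1) (hadd : ‖T u + y‖ ≤ 1) (hsub : ‖T u - y‖ ≤ 1) :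
    1 ≤ b * (b - 1) := by
  set z := T.symm y
  have hTsymm_le {w : F} (hw : ‖w‖ ≤ 1) : ‖T.symm w‖ ≤ b := by
    calc ‖T.symm w‖ ≤ b * ‖w‖ := (T.symm : F →L[𝕜] E).le_of_opNorm_le hT_symm w
      _ ≤ b * 1 := by gcongr; exact (norm_nonneg _).trans hT
      _ = b := mul_one b
  have hz : ‖z‖ ≤ b - 1 := by
    refine hu z ?_ ?_
    · simpa [z] using hTsymm_le hadd
    · simpa [z] using hTsymm_le hsub
  calc 1 = ‖T z‖ := by simp [z, hy]
    _ ≤ b * ‖z‖ := (T : E →L[𝕜] F).le_of_opNorm_le hT z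
    _ ≤ b * (b - 1) := by gcongr; exact (norm_nonneg _).trans hT

namespace MeasureTheory.Linfty

variable {α E : Type*} [MeasurableSpace α] {μ : Measure α} [NormedAddCommGroup E]

theorem ae_norm_le (f : Lp E ⊤ μ) : ∀ᵐ x ∂μ, ‖f x‖ ≤ ‖f‖ := by
  have hfin : eLpNormEssSup f μ ≠ ⊤ := by
    simpa only [eLpNorm_exponent_top] using Lp.eLpNorm_ne_top f
  filter_upwards [ae_le_eLpNormEssSup (f := (f : α → E)) (μ := μ)] with x hx
  rw [Lp.norm_def, eLpNorm_exponent_top, ← toReal_enorm]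
  exact ENNReal.toReal_mono hfin hx

theorem norm_le_of_ae_bound {f : Lp E ⊤ μ} {C : ℝ} (hC : 0 ≤ C) (h : ∀ᵐ x ∂μ, ‖f x‖ ≤ C) :
    ‖f‖ ≤ C := by
  rw [Lp.norm_def, eLpNorm_exponent_top]
  exact ENNReal.toReal_le_of_le_ofReal hC (eLpNormEssSup_le_of_ae_bound h)

theorem norm_add_le_max_of_ae_disjoint {f g : Lp E ⊤ μ} (h : ∀ᵐ x ∂μ, f x = 0 ∨ g x = 0) :
    ‖f + g‖ ≤ max ‖f‖ ‖g‖ := by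
  refine norm_le_of_ae_bound ((norm_nonneg f).trans (le_max_left _ _)) ?_
  filter_upwards [h, Lp.coeFn_add f g, ae_norm_le f, ae_norm_le g] with x hx hadd hf hg
  rw [hadd, Pi.add_apply]
  rcases hx with hfx | hgx
  · simpa [hfx] using hg.trans (le_max_right _ _)
  · simpa [hgx] using hf.trans (le_max_left _ _)

theorem norm_sub_le_max_of_ae_disjoint {f g : Lp E ⊤ μ} (h : ∀ᵐ x ∂μ, f x = 0 ∨ g x = 0) :
    ‖f - g‖ ≤ max ‖f‖ ‖g‖ := by
  have h_neg : ∀ᵐ x ∂μ, f x = 0 ∨ (-g) x = 0 := by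
    filter_upwards [h, Lp.coeFn_neg g] with x hx hneg
    rwa [hneg, Pi.neg_apply, neg_eq_zero]
  simpa [sub_eq_add_neg] using norm_add_le_max_of_ae_disjoint h_neg

theorem norm_le_sub_one_of_norm_add_le {u z : Lp ℝ ⊤ μ} {b : ℝ} (hu : u =ᵐ[μ] 1) (hb : 1 ≤ b)
    (hadd : ‖u + z‖ ≤ b) (hsub : ‖u - z‖ ≤ b) : ‖z‖ ≤ b - 1 := by
  refine norm_le_of_ae_bound (by linarith) ?_
  filter_upwards [hu, Lp.coeFn_add u z, Lp.coeFn_sub u z, ae_norm_le (u + z),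
    ae_norm_le (u - z)] with x hux hadd_x hsub_x hp hm
  rw [hadd_x, Pi.add_apply, hux, Pi.one_apply, Real.norm_eq_abs] at hp
  rw [hsub_x, Pi.sub_apply, hux, Pi.one_apply, Real.norm_eq_abs] at hm
  rw [Real.norm_eq_abs, abs_le]
  constructor <;> linarith [abs_le.mp (hp.trans hadd), abs_le.mp (hm.trans hsub)]

end MeasureTheory.Linfty

instance : IsFiniteMeasure mu01 := by
  rw [mu01]
  infer_instance

noncomputable def chiRight : Lp ℝ ⊤ mu01 :=
  indicatorConstLp ⊤ measurableSet_Ioo (measure_ne_top mu01 (Set.Ioo (1 / 2 : ℝ) 1)) (1 : ℝ)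

theorem oneLinfty_ae_eq_one : oneLinfty =ᵐ[mu01] 1 := by
  filter_upwards [indicatorConstLp_coeFn (p := ⊤) (μ := mu01) (hs := MeasurableSet.univ)
    (hμs := measure_ne_top mu01 _) (c := (1 : ℝ))] with x hx
  exact hx.trans (by simp)

theorem norm_chiHalf_le : ‖chiHalf‖ ≤ 1 :=
  norm_indicatorConstLp_le.trans (by simp)

theorem norm_chiRight : ‖chiRight‖ = 1 := by
  have h_mu : mu01 (Set.Ioo (1 / 2) 1) = volume (Set.Ioo (1 / 2 : ℝ) 1) := by
    rw [mu01, Measure.restrict_apply measurableSet_Ioo,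
      Set.inter_eq_left.mpr (Set.Ioo_subset_Ioo_left (by norm_num))]
  rw [chiRight, norm_indicatorConstLp_top (by rw [h_mu, Real.volume_Ioo]; norm_num)]
  simp

theorem chiHalf_chiRight_ae_disjoint : ∀ᵐ x ∂mu01, chiHalf x = 0 ∨ chiRight x = 0 := by
  filter_upwards [indicatorConstLp_coeFn_notMem (p := ⊤) (μ := mu01) (hs := measurableSet_Icc)
      (s := Set.Icc (0 : ℝ) (1 / 2)) (c := (1 : ℝ)),
    indicatorConstLp_coeFn_notMem (p := ⊤) (μ := mu01) (hs := measurableSet_Ioo)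
      (s := Set.Ioo (1 / 2 : ℝ) 1) (c := (1 : ℝ))] with x hchi hright
  by_cases hx : x ≤ 1 / 2
  · exact Or.inr (hright fun h => (not_lt.mpr hx) h.1)
  · exact Or.inl (hchi fun h => hx h.2)

/-- `χ_{[0,1/2]}` is not in the generalized orbit of `𝟙` in `L^∞(0,1)`; in particular
`L^∞(0,1)` is not asymptotically transitive. -/
theorem stmt_3 :
    ¬ (∀ ε > (0 : ℝ), ∃ T : Lp ℝ ⊤ mu01 ≃L[ℝ] Lp ℝ ⊤ mu01,
        T oneLinfty = chiHalf ∧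
        ‖(T : Lp ℝ ⊤ mu01 →L[ℝ] Lp ℝ ⊤ mu01)‖ ≤ 1 + ε ∧
        ‖(T.symm : Lp ℝ ⊤ mu01 →L[ℝ] Lp ℝ ⊤ mu01)‖ ≤ 1 + ε) := by
  intro h
  obtain ⟨T, hT_one, hT, hT_symm⟩ := h (1 / 2) (by norm_num)
  have h_max : max ‖chiHalf‖ ‖chiRight‖ ≤ 1 := max_le norm_chiHalf_le norm_chiRight.le
  have hadd := (Linfty.norm_add_le_max_of_ae_disjoint chiHalf_chiRight_ae_disjoint).trans h_max
  have hsub := (Linfty.norm_sub_le_max_of_ae_disjoint chiHalf_chiRight_ae_disjoint).trans h_max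
  have key := T.one_le_mul_sub_one_of_norm_apply_add_le hT hT_symm
    (fun _ => Linfty.norm_le_sub_one_of_norm_add_le oneLinfty_ae_eq_one (by norm_num))
    norm_chiRight (hT_one ▸ hadd) (hT_one ▸ hsub)
  norm_num at key
end

section
/- For every x in the unit sphere of a Banach space X, there exists a functional f ∈ X* with f(x) = 1 such that ‖I − f⊗x‖ = η̂(x), i.e., the infimum defining η̂(x) is attained. -/
open Topology Filter Metric

/-- `η̂(y) = inf{‖I − f⊗y‖ : f ∈ X*, f(y) = 1}`, where `f⊗y` is the rank-one
operator `z ↦ f(z) • y`. -/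
noncomputable def etaHat {X : Type*} [NormedAddCommGroup X] [NormedSpace ℝ X] (y : X) : ℝ :=
  sInf {r : ℝ | ∃ f : X →L[ℝ] ℝ, f y = 1 ∧
    ‖ContinuousLinearMap.id ℝ X - f.smulRight y‖ = r}

theorem stmt_4 {X : Type*} [NormedAddCommGroup X] [NormedSpace ℝ X] [CompleteSpace X]
    (x : X) (hx : ‖x‖ = 1) :
    ∃ f : X →L[ℝ] ℝ, f x = 1 ∧
      ‖ContinuousLinearMap.id ℝ X - f.smulRight x‖ = etaHat x := by
  classical
  set S : Set ℝ := {r : ℝ | ∃ f : X →L[ℝ] ℝ, f x = 1 ∧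
    ‖ContinuousLinearMap.id ℝ X - f.smulRight x‖ = r} with hS
  have hxne : x ≠ 0 := by
    intro h; rw [h, norm_zero] at hx; norm_num at hx
  obtain ⟨g0, hg0norm, hg0x⟩ := exists_dual_vector ℝ x (norm_ne_zero_iff.mpr hxne)
  have hg0x' : g0 x = 1 := by rw [hg0x, hx]; norm_num
  have hSne : S.Nonempty := ⟨_, g0, hg0x', rfl⟩
  have hSnonneg : ∀ r ∈ S, 0 ≤ r := by
    rintro r ⟨f, -, rfl⟩; exact norm_nonneg _
  have hInf0 : 0 ≤ etaHat x := Real.sInf_nonneg hSnonneg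
  have hetaS : etaHat x = sInf S := rfl
  -- minimizing sequence
  have hseq : ∀ n : ℕ, ∃ f : X →L[ℝ] ℝ, f x = 1 ∧
      ‖ContinuousLinearMap.id ℝ X - f.smulRight x‖ < etaHat x + 1 / (n + 1) := by
    intro n
    obtain ⟨r, ⟨f, hfx, hfr⟩, hr⟩ := Real.lt_sInf_add_pos hSne
      (by positivity : (0:ℝ) < 1 / (n + 1))
    exact ⟨f, hfx, by rw [hfr]; exact hr⟩
  choose f hfx hfn using hseq
  -- bound on ‖f n‖
  have hfb : ∀ n : ℕ, ‖f n‖ ≤ etaHat x + 2 := by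
    intro n
    have h1 : ‖(f n).smulRight x‖ = ‖f n‖ := by
      rw [ContinuousLinearMap.norm_smulRight_apply, hx, mul_one]
    have h2 : ‖(f n).smulRight x‖ ≤ ‖ContinuousLinearMap.id ℝ X‖ +
        ‖ContinuousLinearMap.id ℝ X - (f n).smulRight x‖ := by
      calc ‖(f n).smulRight x‖
          = ‖ContinuousLinearMap.id ℝ X - (ContinuousLinearMap.id ℝ X - (f n).smulRight x)‖ := by
            congr 1; abel
        _ ≤ _ := norm_sub_le _ _
    have h3 : (1 : ℝ) / (n + 1) ≤ 1 := by
      rw [div_le_one (by positivity)]; linarith [Nat.cast_nonneg (α := ℝ) n]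
    have h4 := (hfn n).le
    have hid : ‖ContinuousLinearMap.id ℝ X‖ ≤ 1 := ContinuousLinearMap.norm_id_le
    linarith [h1 ▸ h2]
  -- Banach-Alaoglu: get a weak* cluster point
  set u : ℕ → WeakDual ℝ X := fun n => StrongDual.toWeakDual (f n) with hu
  have hcpt : IsCompact (WeakDual.toStrongDual ⁻¹'
      Metric.closedBall (0 : StrongDual ℝ X) (etaHat x + 2)) :=
    WeakDual.isCompact_closedBall (𝕜 := ℝ) (0 : StrongDual ℝ X) (etaHat x + 2)
  have hle : Filter.map u Filter.atTop ≤ Filter.principal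
      (WeakDual.toStrongDual ⁻¹' Metric.closedBall (0 : StrongDual ℝ X) (etaHat x + 2)) := by
    rw [Filter.le_principal_iff]
    refine Filter.eventually_atTop.2 ⟨0, fun n _ => ?_⟩
    simp only [Set.mem_preimage, Metric.mem_closedBall, dist_zero_right]
    exact hfb n
  obtain ⟨g, hgmem, hg⟩ := hcpt.exists_clusterPt hle
  have hgc : MapClusterPt g Filter.atTop u := hg
  -- Evaluation cluster points
  have heval : ∀ z : X, MapClusterPt (g z) Filter.atTop (fun n => f n z) := by
    intro z
    have hcont : ContinuousAt (fun h : WeakDual ℝ X => h z) g :=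
      (WeakDual.eval_continuous z).continuousAt
    exact hgc.continuousAt_comp hcont
  obtain ⟨F, hFapp⟩ : ∃ F : X →L[ℝ] ℝ, ∀ z : X, F z = g z :=
    ⟨WeakDual.toStrongDual g, fun z => rfl⟩
  -- F x = 1
  have hFx : F x = 1 := by
    rw [hFapp x]
    have h1 : MapClusterPt (g x) Filter.atTop (fun n => f n x) := heval x
    have hconst : (fun n : ℕ => f n x) = fun _ => (1 : ℝ) := by
      funext n; exact hfx n
    rw [MapClusterPt, hconst, Filter.map_const] at h1
    have h2 : ClusterPt (g x) (𝓝 (1 : ℝ)) := h1.mono (pure_le_nhds 1)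
    exact eq_of_nhds_neBot h2
  -- norm bound for F
  have hFnorm : ‖ContinuousLinearMap.id ℝ X - F.smulRight x‖ ≤ etaHat x := by
    refine ContinuousLinearMap.opNorm_le_bound _ hInf0 fun z => ?_
    have key : ∀ ε : ℝ, 0 < ε →
        ‖z - F z • x‖ ≤ etaHat x * ‖z‖ + ε := by
      intro ε hε
      -- frequently close in evaluation
      have hfreq : ∃ᶠ n in Filter.atTop, |f n z - g z| < ε / 2 := by
        have := mapClusterPt_iff_frequently.mp (heval z) (Metric.ball (g z) (ε/2))
          (Metric.ball_mem_nhds _ (by positivity))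
        refine this.mono fun n hn => ?_
        simpa [Real.dist_eq] using hn
      obtain ⟨N, hN⟩ : ∃ N : ℕ, (1 : ℝ) / (N + 1) * ‖z‖ < ε / 2 := by
        obtain ⟨N, hN⟩ := exists_nat_gt ((‖z‖ + 1) * (2 / ε))
        refine ⟨N, ?_⟩
        have hNpos : (0:ℝ) < N + 1 := by positivity
        rw [div_mul_eq_mul_div, div_lt_iff₀ hNpos]
        have h1 : (‖z‖ + 1) * (2 / ε) < N + 1 := by linarith
        have h2 : ‖z‖ * (2/ε) < N + 1 := by nlinarith [div_pos (by norm_num : (0:ℝ) < 2) hε]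
        calc 1 * ‖z‖ = ‖z‖ := one_mul _
          _ = (‖z‖ * (2/ε)) * (ε/2) := by field_simp
          _ < (N+1) * (ε/2) := by nlinarith
          _ = ε/2 * (N+1) := mul_comm _ _
      obtain ⟨n, hn1, hn2⟩ := (hfreq.and_eventually (Filter.eventually_atTop.2
        ⟨N, fun n hn => hn⟩)).exists
      have hmono : (1:ℝ) / (n + 1) ≤ 1 / (N + 1) := by
        apply div_le_div_of_nonneg_left (by norm_num) (by positivity)
        have : (N:ℝ) ≤ n := Nat.cast_le.mpr hn2
        linarith
      have hbnd : ‖z - f n z • x‖ ≤ (etaHat x + 1 / (n + 1)) * ‖z‖ := by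
        have := (ContinuousLinearMap.id ℝ X - (f n).smulRight x).le_opNorm z
        simp only [ContinuousLinearMap.sub_apply, ContinuousLinearMap.id_apply,
          ContinuousLinearMap.smulRight_apply] at this
        calc ‖z - f n z • x‖ ≤ ‖ContinuousLinearMap.id ℝ X - (f n).smulRight x‖ * ‖z‖ := this
          _ ≤ (etaHat x + 1 / (n + 1)) * ‖z‖ :=
            mul_le_mul_of_nonneg_right (hfn n).le (norm_nonneg z)
      calc ‖z - F z • x‖ = ‖(z - f n z • x) + (f n z - F z) • x‖ := by
            congr 1
            rw [sub_smul]; abel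
        _ ≤ ‖z - f n z • x‖ + ‖(f n z - F z) • x‖ := norm_add_le _ _
        _ ≤ (etaHat x + 1 / (n + 1)) * ‖z‖ + |f n z - F z| * ‖x‖ := by
            rw [norm_smul]; exact add_le_add hbnd (le_of_eq rfl)
        _ ≤ etaHat x * ‖z‖ + ε/2 + ε/2 := by
            rw [hx, mul_one, hFapp]
            have h5 : (1:ℝ) / (n + 1) * ‖z‖ ≤ 1 / (N + 1) * ‖z‖ :=
              mul_le_mul_of_nonneg_right hmono (norm_nonneg z)
            have h6 : |f n z - g z| ≤ ε/2 := hn1.le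
            have h7 : 1 / ((n:ℝ) + 1) * ‖z‖ < ε / 2 := lt_of_le_of_lt h5 hN
            nlinarith [norm_nonneg z]
        _ = etaHat x * ‖z‖ + ε := by ring
    have h7 : ‖z - F z • x‖ ≤ etaHat x * ‖z‖ :=
      le_of_forall_pos_le_add fun ε hε => key ε hε
    simpa using h7
  -- conclusion
  refine ⟨F, hFx, le_antisymm hFnorm ?_⟩
  exact csInf_le ⟨0, fun r hr => hSnonneg r hr⟩ ⟨F, hFx, rfl⟩
end

section
/- The map η̂ : S_X → ℝ defined by η̂(y) = inf{‖I − f⊗y‖ : f ∈ X*, f(y) = 1} is uniformly continuous on the unit sphere of any Banach space X. -/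
set_option maxHeartbeats 2000000

open ContinuousLinearMap

lemma etaHat_bdd {X : Type*} [NormedAddCommGroup X] [NormedSpace ℝ X] (y : X) :
    BddBelow {r : ℝ | ∃ f : X →L[ℝ] ℝ, f y = 1 ∧
      ‖ContinuousLinearMap.id ℝ X - f.smulRight y‖ = r} :=
  ⟨0, fun r hr => by obtain ⟨f, _, hfr⟩ := hr; exact hfr ▸ norm_nonneg _⟩

lemma etaHat_le {X : Type*} [NormedAddCommGroup X] [NormedSpace ℝ X] {y : X}
    (f : X →L[ℝ] ℝ) (hf : f y = 1) :
    etaHat y ≤ ‖ContinuousLinearMap.id ℝ X - f.smulRight y‖ :=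
  csInf_le (etaHat_bdd y) ⟨f, hf, rfl⟩

lemma etaHat_aux {X : Type*} [NormedAddCommGroup X] [NormedSpace ℝ X]
    {x y : X} (hx : ‖x‖ = 1) (hy : ‖y‖ = 1) {ε : ℝ} (hε : 0 < ε) (hε1 : ε ≤ 1)
    (hxy : ‖x - y‖ < ε / 60) : etaHat x < etaHat y + ε := by
  have hy0 : y ≠ 0 := by intro h; rw [h, norm_zero] at hy; norm_num at hy
  obtain ⟨g, hg1, hgy⟩ := exists_dual_vector ℝ y (norm_ne_zero_iff.mpr hy0)
  have hgy' : g y = 1 := by rw [hgy, hy]; norm_num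
  have hne : {r : ℝ | ∃ f : X →L[ℝ] ℝ, f y = 1 ∧
      ‖ContinuousLinearMap.id ℝ X - f.smulRight y‖ = r}.Nonempty :=
    ⟨_, g, hgy', rfl⟩
  have hgnorm : ‖g.smulRight y‖ = 1 := by
    rw [norm_smulRight_apply, hg1, hy, one_mul]
  have hη2 : etaHat y ≤ 2 := by
    refine le_trans (etaHat_le g hgy') ?_
    calc ‖ContinuousLinearMap.id ℝ X - g.smulRight y‖
        ≤ ‖(ContinuousLinearMap.id ℝ X : X →L[ℝ] X)‖ + ‖g.smulRight y‖ := norm_sub_le _ _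
      _ ≤ 1 + 1 := by rw [hgnorm]; exact add_le_add_left (norm_id_le) 1
      _ = 2 := by norm_num
  obtain ⟨r, ⟨f, hfy, hfr⟩, hrlt⟩ := Real.lt_sInf_add_pos hne (half_pos hε)
  have hrlt' : r < etaHat y + ε / 2 := hrlt
  have hr0 : (0:ℝ) ≤ r := hfr ▸ norm_nonneg _
  have hfnorm : ‖f‖ ≤ 1 + r := by
    have h1 : ‖f.smulRight y‖ = ‖f‖ := by rw [norm_smulRight_apply, hy, mul_one]
    have heq : f.smulRight y = ContinuousLinearMap.id ℝ X -
        (ContinuousLinearMap.id ℝ X - f.smulRight y) := by abel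
    calc ‖f‖ = ‖f.smulRight y‖ := h1.symm
      _ = ‖ContinuousLinearMap.id ℝ X - (ContinuousLinearMap.id ℝ X - f.smulRight y)‖ := by
          rw [← heq]
      _ ≤ ‖(ContinuousLinearMap.id ℝ X : X →L[ℝ] X)‖ +
          ‖ContinuousLinearMap.id ℝ X - f.smulRight y‖ := norm_sub_le _ _
      _ ≤ 1 + r := by rw [hfr]; exact add_le_add_left norm_id_le r
  have ha : ‖f‖ ≤ 3.5 := by nlinarith
  set d := ‖x - y‖ with hd
  have hd0 : (0:ℝ) ≤ d := norm_nonneg _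
  have hc : |f x - 1| ≤ ‖f‖ * d := by
    have h : f x - 1 = f (x - y) := by rw [map_sub, hfy]
    rw [h]
    exact f.le_opNorm _
  have h2 : ‖f‖ * d ≤ 3.5 * (ε / 60) := mul_le_mul ha hxy.le hd0 (by norm_num)
  have habs : |f x - 1| ≤ 3.5 * (ε / 60) := hc.trans h2
  have hclb : (1:ℝ)/2 ≤ f x := by
    have h := abs_le.mp habs
    have : ε / 60 ≤ 1 / 60 := by linarith
    nlinarith [h.1]
  have hc0 : f x ≠ 0 := by positivity
  set c := f x with hcdef
  set g2 : X →L[ℝ] ℝ := c⁻¹ • f with hg2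
  have hg2x : g2 x = 1 := by
    simp only [hg2, ContinuousLinearMap.smul_apply, smul_eq_mul]; exact inv_mul_cancel₀ hc0
  have key : ‖ContinuousLinearMap.id ℝ X - g2.smulRight x‖ ≤
      r + ‖f‖ * d + |1 - c⁻¹| * ‖f‖ := by
    have e1 : ContinuousLinearMap.id ℝ X - g2.smulRight x =
        (ContinuousLinearMap.id ℝ X - f.smulRight y) + f.smulRight (y - x)
          + (f - g2).smulRight x := by
      ext z
      simp [sub_smul, smul_sub]
    rw [e1]
    have n1 : ‖f.smulRight (y - x)‖ ≤ ‖f‖ * d := by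
      rw [norm_smulRight_apply, show ‖y - x‖ = d from by rw [hd, norm_sub_rev]]
    have n2 : ‖(f - g2).smulRight x‖ = |1 - c⁻¹| * ‖f‖ := by
      rw [norm_smulRight_apply, hx, mul_one]
      have h3 : f - g2 = (1 - c⁻¹) • f := by rw [hg2]; ext z; simp [sub_mul]
      rw [h3, norm_smul, Real.norm_eq_abs]
    calc ‖(ContinuousLinearMap.id ℝ X - f.smulRight y) + f.smulRight (y - x)
          + (f - g2).smulRight x‖
        ≤ ‖(ContinuousLinearMap.id ℝ X - f.smulRight y) + f.smulRight (y - x)‖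
            + ‖(f - g2).smulRight x‖ := norm_add_le _ _
      _ ≤ ‖ContinuousLinearMap.id ℝ X - f.smulRight y‖ + ‖f.smulRight (y - x)‖
            + ‖(f - g2).smulRight x‖ := by
          gcongr; exact norm_add_le _ _
      _ ≤ r + ‖f‖ * d + |1 - c⁻¹| * ‖f‖ := by rw [hfr, n2]; gcongr
  have hcpos : (0:ℝ) < c := by linarith
  have hinv : |1 - c⁻¹| ≤ 2 * (‖f‖ * d) := by
    have heq : 1 - c⁻¹ = (c - 1) / c := by field_simp
    rw [heq, abs_div, abs_of_pos hcpos, div_le_iff₀ hcpos]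
    have h1 : |c - 1| ≤ ‖f‖ * d := hc
    calc |c - 1| ≤ ‖f‖ * d := h1
      _ = 2 * (‖f‖ * d) * (1/2) := by ring
      _ ≤ 2 * (‖f‖ * d) * c := by
          have : (0:ℝ) ≤ 2 * (‖f‖ * d) := by positivity
          nlinarith
  have h3 : |1 - c⁻¹| * ‖f‖ ≤ 2 * (‖f‖ * d) * ‖f‖ :=
    mul_le_mul_of_nonneg_right hinv (norm_nonneg f)
  have hdle : d ≤ ε / 60 := hxy.le
  have h4 : 2 * (‖f‖ * d) * ‖f‖ ≤ 2 * (3.5 * (ε / 60)) * 3.5 := by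
    gcongr <;> positivity
  have h5 : 2 * (3.5 * (ε / 60)) * 3.5 = 24.5 * (ε / 60) := by ring
  have h1 : etaHat x ≤ ‖ContinuousLinearMap.id ℝ X - g2.smulRight x‖ := etaHat_le g2 hg2x
  linarith

theorem stmt_5 {X : Type*} [NormedAddCommGroup X] [NormedSpace ℝ X] [CompleteSpace X] :
    ∀ ε > 0, ∃ δ > 0, ∀ x y : X, ‖x‖ = 1 → ‖y‖ = 1 → ‖x - y‖ < δ →
      |etaHat x - etaHat y| < ε := by
  intro ε hε
  set ε' := min ε 1 with hε'
  have hε'0 : 0 < ε' := lt_min hε one_pos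
  have hε'1 : ε' ≤ 1 := min_le_right _ _
  refine ⟨ε'/60, by positivity, fun x y hx hy hxy => ?_⟩
  have h1 : etaHat x < etaHat y + ε' := etaHat_aux hx hy hε'0 hε'1 hxy
  have h2 : etaHat y < etaHat x + ε' := by
    refine etaHat_aux hy hx hε'0 hε'1 ?_
    rwa [norm_sub_rev]
  have : ε' ≤ ε := min_le_left _ _
  rw [abs_lt]
  constructor <;> linarith
end

section
/- Suppose X is asymptotically transitive and its norm is Fréchet differentiable at every point of the unit sphere. Then there is a constant C such that ‖I − P‖ = C for every rank-one linear projection P ∈ L(X) with ‖P‖ = 1. -/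
/-!
Conjugating `P = f ⊗ x` by an automorphism `T` with `T x = y` gives `(f ∘ T⁻¹) ⊗ y`, and
`‖I - P‖` changes at most by the factor `‖T‖ ‖T⁻¹‖`. For almost isometric `T` the functional
`f ∘ T⁻¹` attains `1` at `y` and has norm close to `1`, so by Šmulyan's lemma it is close to the
Fréchet derivative of the norm at `y`, which is the unique norming functional `g` of `y`. Hence
`‖I - g ⊗ y‖ ≤ ‖I - f ⊗ x‖`, and equality follows by symmetry.
-/

open Filter Topology

namespace ContinuousLinearMap

section RankOne

variable {𝕜 E : Type*} [NontriviallyNormedField 𝕜] [NormedAddCommGroup E] [NormedSpace 𝕜 E]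

theorem conj_one_sub_smulRight (T : E ≃L[𝕜] E) (f : E →L[𝕜] 𝕜) (x : E) :
    (T : E →L[𝕜] E).comp ((1 - f.smulRight x).comp (T.symm : E →L[𝕜] E)) =
      1 - (f.comp (T.symm : E →L[𝕜] E)).smulRight (T x) := by
  ext z
  simp

theorem norm_one_sub_smulRight_conj_le (T : E ≃L[𝕜] E) (f : E →L[𝕜] 𝕜) (x : E) :
    ‖1 - (f.comp (T.symm : E →L[𝕜] E)).smulRight (T x)‖ ≤
      ‖(T : E →L[𝕜] E)‖ * ‖1 - f.smulRight x‖ * ‖(T.symm : E →L[𝕜] E)‖ := by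
  rw [← conj_one_sub_smulRight, mul_assoc]
  exact (opNorm_comp_le _ _).trans (by gcongr; exact opNorm_comp_le _ _)

theorem norm_one_sub_smulRight_le_add (g h : E →L[𝕜] 𝕜) (y : E) :
    ‖1 - g.smulRight y‖ ≤ ‖1 - h.smulRight y‖ + ‖h - g‖ * ‖y‖ := by
  have hsplit : 1 - g.smulRight y = (1 - h.smulRight y) + (h - g).smulRight y := by
    ext z
    simp [sub_smul]
  rw [hsplit, ← norm_smulRight_apply]
  exact norm_add_le _ _

theorem one_le_norm_of_apply_eq_one {f : E →L[𝕜] 𝕜} {x : E} (hx : ‖x‖ = 1) (hfx : f x = 1) :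
    1 ≤ ‖f‖ := by
  simpa [hx, hfx] using f.le_opNorm x

end RankOne

section Smulyan

variable {X : Type*} [NormedAddCommGroup X] [NormedSpace ℝ X] {y : X} {f₀ : X →L[ℝ] ℝ}

theorem norm_sub_le_of_remainder_le {h : X →L[ℝ] ℝ} (hy : ‖y‖ = 1) (hhy : h y = 1)
    {t c : ℝ} (ht : 0 < t) (hc : 0 ≤ c) (hr : ∀ v, ‖v‖ ≤ t → ‖y + v‖ - 1 - f₀ v ≤ c * ‖v‖) :
    ‖h - f₀‖ ≤ (‖h‖ - 1) * (1 + t) / t + c := by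
  have hh : 1 ≤ ‖h‖ := one_le_norm_of_apply_eq_one hy hhy
  have key : ∀ u : X, ‖u‖ = 1 → (h - f₀) u ≤ (‖h‖ - 1) * (1 + t) / t + c := by
    intro u hu
    have htu : ‖t • u‖ = t := by rw [norm_smul, hu, Real.norm_of_nonneg ht.le, mul_one]
    have hsum : ‖y + t • u‖ ≤ 1 + t := (norm_add_le _ _).trans (by rw [hy, htu])
    have hrem := hr (t • u) htu.le
    have hnorming : h (y + t • u) ≤ ‖h‖ * ‖y + t • u‖ := (le_abs_self _).trans (h.le_opNorm _)
    simp only [map_add, map_smul, hhy, htu, smul_eq_mul] at hrem hnorming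
    -- `(h - f₀) (t • u) = h (y + t • u) - 1 - f₀ (t • u)`
    -- `≤ (‖h‖ - 1) * ‖y + t • u‖ + (‖y + t • u‖ - 1 - f₀ (t • u))`
    have : t * (h - f₀) u ≤ (‖h‖ - 1) * (1 + t) + c * t := by
      rw [sub_apply]
      linarith [mul_le_mul_of_nonneg_left hsum (sub_nonneg.2 hh)]
    rw [div_add' _ _ _ ht.ne', le_div_iff₀ ht]
    linarith
  refine opNorm_le_of_unit_norm (by positivity) fun u hu => abs_le.2 ⟨?_, key u hu⟩
  have := key (-u) (by rw [norm_neg, hu])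
  rw [map_neg] at this
  linarith

theorem tendsto_of_hasFDerivAt_norm {ι : Type*} {l : Filter ι} (hy : ‖y‖ = 1)
    (hd : HasFDerivAt (‖·‖) f₀ y) {h : ι → X →L[ℝ] ℝ} (hhy : ∀ i, h i y = 1)
    (hh : Tendsto (fun i => ‖h i‖) l (𝓝 1)) : Tendsto h l (𝓝 f₀) := by
  rw [Metric.tendsto_nhds]
  intro δ hδ
  obtain ⟨t, ht, hr⟩ := Metric.nhds_basis_closedBall.eventually_iff.1
    ((hasFDerivAt_iff_isLittleO_nhds_zero.1 hd).def (half_pos hδ))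
  have hlim : Tendsto (fun i => (‖h i‖ - 1) * (1 + t) / t) l (𝓝 0) := by
    simpa using ((hh.sub_const 1).mul_const (1 + t)).div_const t
  filter_upwards [hlim.eventually (gt_mem_nhds (half_pos hδ))] with i hi
  rw [dist_eq_norm]
  refine (norm_sub_le_of_remainder_le hy (hhy i) ht (half_pos hδ).le fun v hv => ?_).trans_lt
    (by linarith)
  have := hr (mem_closedBall_zero_iff.2 hv)
  rw [hy, Real.norm_eq_abs] at this
  exact (le_abs_self _).trans this

theorem eq_of_hasFDerivAt_norm (hy : ‖y‖ = 1) (hd : HasFDerivAt (‖·‖) f₀ y) {g : X →L[ℝ] ℝ}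
    (hgy : g y = 1) (hg : ‖g‖ = 1) : g = f₀ :=
  tendsto_nhds_unique tendsto_const_nhds
    (tendsto_of_hasFDerivAt_norm (l := (⊤ : Filter Unit)) hy hd (fun _ => hgy) (by simp [hg]))

end Smulyan

theorem norm_one_sub_smulRight_le {X : Type*} [NormedAddCommGroup X] [NormedSpace ℝ X]
    {f g : X →L[ℝ] ℝ} {x y : X} (hf : ‖f‖ = 1) (hfx : f x = 1) (hy : ‖y‖ = 1) (hg : ‖g‖ = 1)
    (hgy : g y = 1) (hd : DifferentiableAt ℝ (‖·‖) y)
    (hT : ∀ ε > 0, ∃ T : X ≃L[ℝ] X,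
      T x = y ∧ ‖(T : X →L[ℝ] X)‖ ≤ 1 + ε ∧ ‖(T.symm : X →L[ℝ] X)‖ ≤ 1 + ε) :
    ‖1 - g.smulRight y‖ ≤ ‖1 - f.smulRight x‖ := by
  choose T hTx hT hTs using fun n : ℕ => hT (1 / (n + 1)) Nat.one_div_pos_of_nat
  set h : ℕ → X →L[ℝ] ℝ := fun n => f.comp ((T n).symm : X →L[ℝ] X)
  have hε : Tendsto (fun n : ℕ => 1 + 1 / ((n : ℝ) + 1)) atTop (𝓝 1) := by
    simpa using (tendsto_one_div_add_atTop_nhds_zero_nat (𝕜 := ℝ)).const_add 1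
  have hhy : ∀ n, h n y = 1 := fun n => by simp [h, ← hTx n, hfx]
  have hnorm : Tendsto (fun n => ‖h n‖) atTop (𝓝 1) :=
    tendsto_of_tendsto_of_tendsto_of_le_of_le tendsto_const_nhds hε
      (fun n => one_le_norm_of_apply_eq_one hy (hhy n))
      (fun n => (opNorm_comp_le _ _).trans (by rw [hf, one_mul]; exact hTs n))
  have hconv : Tendsto h atTop (𝓝 g) := by
    rw [eq_of_hasFDerivAt_norm hy hd.hasFDerivAt hgy hg]
    exact tendsto_of_hasFDerivAt_norm hy hd.hasFDerivAt hhy hnorm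
  have hbound : ∀ n : ℕ, ‖1 - g.smulRight y‖ ≤
      (1 + 1 / ((n : ℝ) + 1)) * ‖1 - f.smulRight x‖ * (1 + 1 / ((n : ℝ) + 1)) +
        ‖h n - g‖ := fun n => by
    refine (norm_one_sub_smulRight_le_add g (h n) y).trans ?_
    rw [hy, mul_one, ← hTx n]
    gcongr
    exact (norm_one_sub_smulRight_conj_le (T n) f x).trans (by gcongr; exacts [hT n, hTs n])
  refine ge_of_tendsto' (x := atTop) ?_ hbound
  simpa using ((hε.mul_const _).mul hε).add (tendsto_iff_norm_sub_tendsto_zero.1 hconv)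

end ContinuousLinearMap

theorem stmt_10_general {X : Type*} [NormedAddCommGroup X] [NormedSpace ℝ X]
    (hAT : ∀ x y : X, ‖x‖ = 1 → ‖y‖ = 1 → ∀ ε > 0, ∃ T : X ≃L[ℝ] X,
      T x = y ∧ ‖(T : X →L[ℝ] X)‖ ≤ 1 + ε ∧ ‖(T.symm : X →L[ℝ] X)‖ ≤ 1 + ε)
    (hFrechet : ∀ x : X, ‖x‖ = 1 → DifferentiableAt ℝ (fun y : X => ‖y‖) x) :
    ∃ C : ℝ, ∀ (f : X →L[ℝ] ℝ) (x : X), ‖x‖ = 1 → ‖f‖ = 1 → f x = 1 →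
      ‖ContinuousLinearMap.id ℝ X - f.smulRight x‖ = C := by
  open ContinuousLinearMap in
  by_cases hex : ∃ (f₀ : X →L[ℝ] ℝ) (x₀ : X), ‖x₀‖ = 1 ∧ ‖f₀‖ = 1 ∧ f₀ x₀ = 1
  · obtain ⟨f₀, x₀, hx₀, hf₀, hfx₀⟩ := hex
    refine ⟨‖1 - f₀.smulRight x₀‖, fun f x hx hf hfx => le_antisymm ?_ ?_⟩
    · exact norm_one_sub_smulRight_le hf₀ hfx₀ hx hf hfx (hFrechet x hx) (hAT x₀ x hx₀ hx)
    · exact norm_one_sub_smulRight_le hf hfx hx₀ hf₀ hfx₀ (hFrechet x₀ hx₀) (hAT x x₀ hx hx₀)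
  · exact ⟨0, fun f x hx hf hfx => (hex ⟨f, x, hx, hf, hfx⟩).elim⟩

theorem stmt_10 {X : Type*} [NormedAddCommGroup X] [NormedSpace ℝ X] [CompleteSpace X]
    (hAT : ∀ x y : X, ‖x‖ = 1 → ‖y‖ = 1 → ∀ ε > 0, ∃ T : X ≃L[ℝ] X,
      T x = y ∧ ‖(T : X →L[ℝ] X)‖ ≤ 1 + ε ∧ ‖(T.symm : X →L[ℝ] X)‖ ≤ 1 + ε)
    (hFrechet : ∀ x : X, ‖x‖ = 1 → DifferentiableAt ℝ (fun y : X => ‖y‖) x) :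
    ∃ C : ℝ, ∀ (f : X →L[ℝ] ℝ) (x : X), ‖x‖ = 1 → ‖f‖ = 1 → f x = 1 →
      ‖ContinuousLinearMap.id ℝ X - f.smulRight x‖ = C :=
  stmt_10_general hAT hFrechet
end

section
/- Let X, Y be Banach spaces, x ∈ S_X, y ∈ S_Y, and T : X → Y a linear isomorphism with T(x) = y. Then Δ_Y(y, ε·Δ_X(x,ε) / (‖T⁻¹‖(‖T‖ + Δ_X(x,ε) − 1))) ≤ Δ_X(x,ε) for all 0 ≤ ε < 1 (with the convention 0/0 = 0). -/
/-- The local modulus of convexity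
`Δ_X(z,ε) = inf{1 − λ ≥ 0 : ∃ v, ‖v‖ ≥ ε, ‖λz ± v‖ ≤ 1}`. -/
noncomputable def localModulusOfConvexity {X : Type*} [NormedAddCommGroup X] [NormedSpace ℝ X]
    (z : X) (ε : ℝ) : ℝ :=
  sInf {d : ℝ | 0 ≤ d ∧ ∃ v : X, ε ≤ ‖v‖ ∧
    ‖(1 - d) • z + v‖ ≤ 1 ∧ ‖(1 - d) • z - v‖ ≤ 1}

lemma lmoc_le {Z : Type*} [NormedAddCommGroup Z] [NormedSpace ℝ Z] (z : Z) (ε d : ℝ)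
    (hd : 0 ≤ d) (v : Z) (h1 : ε ≤ ‖v‖) (h2 : ‖(1 - d) • z + v‖ ≤ 1)
    (h3 : ‖(1 - d) • z - v‖ ≤ 1) : localModulusOfConvexity z ε ≤ d :=
  csInf_le ⟨0, fun _ hx => hx.1⟩ ⟨hd, v, h1, h2, h3⟩

theorem stmt_11 {X Y : Type*} [NormedAddCommGroup X] [NormedSpace ℝ X] [CompleteSpace X]
    [NormedAddCommGroup Y] [NormedSpace ℝ Y] [CompleteSpace Y]
    (x : X) (y : Y) (hx : ‖x‖ = 1) (hy : ‖y‖ = 1)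
    (T : X ≃L[ℝ] Y) (hT : T x = y) (ε : ℝ) (hε0 : 0 ≤ ε) (hε1 : ε < 1) :
    localModulusOfConvexity y
        (ε * localModulusOfConvexity x ε /
          (‖(T.symm : Y →L[ℝ] X)‖ *
            (‖(T : X →L[ℝ] Y)‖ + localModulusOfConvexity x ε - 1))) ≤
      localModulusOfConvexity x ε := by
  classical
  set nT := ‖(T : X →L[ℝ] Y)‖ with hnT
  set nS := ‖(T.symm : Y →L[ℝ] X)‖ with hnS
  have hT1 : 1 ≤ nT := by
    have h := (T : X →L[ℝ] Y).le_opNorm x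
    simp only [ContinuousLinearEquiv.coe_coe] at h
    rw [hT, hy, hx, mul_one] at h
    exact h
  have hsy : T.symm y = x := by rw [← hT]; exact T.symm_apply_apply x
  have hS1 : 1 ≤ nS := by
    have h := (T.symm : Y →L[ℝ] X).le_opNorm y
    simp only [ContinuousLinearEquiv.coe_coe] at h
    rw [hsy, hx, hy, mul_one] at h
    exact h
  set δ := localModulusOfConvexity x ε with hδ
  have hδ0 : 0 ≤ δ := Real.sInf_nonneg fun d hd => hd.1
  by_cases h1 : 1 ≤ δ
  · -- easy case: LHS ≤ 1 ≤ δ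
    refine le_trans (lmoc_le y _ 1 zero_le_one (ε • y) ?_ ?_ ?_) h1
    · rw [norm_smul, hy, mul_one, Real.norm_of_nonneg hε0]
      have hDpos : 0 < nS * (nT + δ - 1) := by nlinarith
      rw [div_le_iff₀ hDpos]
      have hD : δ ≤ nS * (nT + δ - 1) := by nlinarith
      exact mul_le_mul_of_nonneg_left hD hε0
    · simp only [sub_self, zero_smul, zero_add, norm_smul, hy, mul_one,
        Real.norm_of_nonneg hε0]
      linarith
    · simp only [sub_self, zero_smul, zero_sub, norm_neg, norm_smul, hy, mul_one,
        Real.norm_of_nonneg hε0]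
      linarith
  · push_neg at h1
    by_cases hδz : δ = 0
    · have hε'z : ε * δ / (nS * (nT + δ - 1)) = 0 := by
        rw [hδz, mul_zero, zero_div]
      rw [hε'z]
      refine le_trans (lmoc_le y 0 0 le_rfl 0 (by simp) ?_ ?_) hδ0
      · simp [hy]
      · simp [hy]
    · have hδpos : 0 < δ := lt_of_le_of_ne hδ0 (Ne.symm hδz)
      have hSX : δ = sInf {d : ℝ | 0 ≤ d ∧ ∃ v : X, ε ≤ ‖v‖ ∧
          ‖(1 - d) • x + v‖ ≤ 1 ∧ ‖(1 - d) • x - v‖ ≤ 1} := rfl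
      have hne : {d : ℝ | 0 ≤ d ∧ ∃ v : X, ε ≤ ‖v‖ ∧
          ‖(1 - d) • x + v‖ ≤ 1 ∧ ‖(1 - d) • x - v‖ ≤ 1}.Nonempty := by
        refine ⟨1, zero_le_one, ε • x, ?_, ?_, ?_⟩
        · rw [norm_smul, hx, mul_one, Real.norm_of_nonneg hε0]
        · simp only [sub_self, zero_smul, zero_add, norm_smul, hx, mul_one,
            Real.norm_of_nonneg hε0]
          linarith
        · simp only [sub_self, zero_smul, zero_sub, norm_neg, norm_smul, hx, mul_one,
            Real.norm_of_nonneg hε0]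
          linarith
      have hbdd : BddBelow {d : ℝ | 0 ≤ d ∧ ∃ v : X, ε ≤ ‖v‖ ∧
          ‖(1 - d) • x + v‖ ≤ 1 ∧ ‖(1 - d) • x - v‖ ≤ 1} := ⟨0, fun _ ht => ht.1⟩
      refine le_of_forall_pos_le_add fun η hη => ?_
      set η' := min η ((1 - δ) / 2) with hη'def
      have hη'pos : 0 < η' := lt_min hη (by linarith)
      have hlt : sInf {d : ℝ | 0 ≤ d ∧ ∃ v : X, ε ≤ ‖v‖ ∧
          ‖(1 - d) • x + v‖ ≤ 1 ∧ ‖(1 - d) • x - v‖ ≤ 1} < δ + η' := by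
        rw [← hSX]; linarith
      obtain ⟨d, hdmem, hdlt⟩ := exists_lt_of_csInf_lt hne hlt
      have hdδ : δ ≤ d := by rw [hSX]; exact csInf_le hbdd hdmem
      obtain ⟨hd0, v, hv, hv1, hv2⟩ := hdmem
      have hd1 : d < 1 := by
        have := min_le_right η ((1 - δ) / 2)
        have : η' ≤ (1 - δ) / 2 := this
        linarith
      have hdpos : 0 < d := lt_of_lt_of_le hδpos hdδ
      set w := T v with hw
      have hwn : ε / nS ≤ ‖w‖ := by
        have h := (T.symm : Y →L[ℝ] X).le_opNorm w
        simp only [ContinuousLinearEquiv.coe_coe, hw, ContinuousLinearEquiv.symm_apply_apply]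
          at h
        rw [div_le_iff₀ (by linarith : (0:ℝ) < nS)]
        calc ε ≤ ‖v‖ := hv
          _ ≤ nS * ‖w‖ := h
          _ = ‖w‖ * nS := mul_comm _ _
      set t := d / (nT + d - 1) with htdef
      have hDpos : 0 < nT + d - 1 := by linarith
      have ht0 : 0 ≤ t := div_nonneg hd0 hDpos.le
      have ht1 : t ≤ 1 := by rw [div_le_one hDpos]; linarith
      have hkey : t * nT + (1 - t) * (1 - d) = 1 := by
        rw [htdef]; field_simp; ring
      have hTp : ‖(1 - d) • y + w‖ ≤ nT := by
        have heq : (1 - d) • y + w = T ((1 - d) • x + v) := by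
          rw [map_add, map_smul, hT]
        rw [heq]
        calc ‖T ((1 - d) • x + v)‖ = ‖(T : X →L[ℝ] Y) ((1 - d) • x + v)‖ := by
              simp only [ContinuousLinearEquiv.coe_coe]
          _ ≤ nT * ‖(1 - d) • x + v‖ := (T : X →L[ℝ] Y).le_opNorm _
          _ ≤ nT * 1 := mul_le_mul_of_nonneg_left hv1 (by linarith)
          _ = nT := mul_one nT
      have hTm : ‖(1 - d) • y - w‖ ≤ nT := by
        have heq : (1 - d) • y - w = T ((1 - d) • x - v) := by
          rw [map_sub, map_smul, hT]
        rw [heq]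
        calc ‖T ((1 - d) • x - v)‖ = ‖(T : X →L[ℝ] Y) ((1 - d) • x - v)‖ := by
              simp only [ContinuousLinearEquiv.coe_coe]
          _ ≤ nT * ‖(1 - d) • x - v‖ := (T : X →L[ℝ] Y).le_opNorm _
          _ ≤ nT * 1 := mul_le_mul_of_nonneg_left hv2 (by linarith)
          _ = nT := mul_one nT
      have hnorm1 : ‖(1 - d) • y + t • w‖ ≤ 1 := by
        have heq : (1 - d) • y + t • w
            = t • ((1 - d) • y + w) + (1 - t) • ((1 - d) • y) := by module
        rw [heq]
        calc ‖t • ((1 - d) • y + w) + (1 - t) • ((1 - d) • y)‖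
            ≤ ‖t • ((1 - d) • y + w)‖ + ‖(1 - t) • ((1 - d) • y)‖ := norm_add_le _ _
          _ = t * ‖(1 - d) • y + w‖ + (1 - t) * (1 - d) := by
              rw [norm_smul, norm_smul, norm_smul, hy, mul_one,
                Real.norm_of_nonneg ht0, Real.norm_of_nonneg (by linarith : (0:ℝ) ≤ 1 - t),
                Real.norm_of_nonneg (by linarith : (0:ℝ) ≤ 1 - d)]
          _ ≤ t * nT + (1 - t) * (1 - d) :=
              add_le_add (mul_le_mul_of_nonneg_left hTp ht0) le_rfl
          _ = 1 := hkey
      have hnorm2 : ‖(1 - d) • y - t • w‖ ≤ 1 := by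
        have heq : (1 - d) • y - t • w
            = t • ((1 - d) • y - w) + (1 - t) • ((1 - d) • y) := by module
        rw [heq]
        calc ‖t • ((1 - d) • y - w) + (1 - t) • ((1 - d) • y)‖
            ≤ ‖t • ((1 - d) • y - w)‖ + ‖(1 - t) • ((1 - d) • y)‖ := norm_add_le _ _
          _ = t * ‖(1 - d) • y - w‖ + (1 - t) * (1 - d) := by
              rw [norm_smul, norm_smul, norm_smul, hy, mul_one,
                Real.norm_of_nonneg ht0, Real.norm_of_nonneg (by linarith : (0:ℝ) ≤ 1 - t),
                Real.norm_of_nonneg (by linarith : (0:ℝ) ≤ 1 - d)]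
          _ ≤ t * nT + (1 - t) * (1 - d) :=
              add_le_add (mul_le_mul_of_nonneg_left hTm ht0) le_rfl
          _ = 1 := hkey
      have hlow : ε * δ / (nS * (nT + δ - 1)) ≤ ‖t • w‖ := by
        rw [norm_smul, Real.norm_of_nonneg ht0]
        have hDδ : 0 < nT + δ - 1 := by linarith
        have hmono : δ / (nT + δ - 1) ≤ t := by
          rw [htdef, div_le_div_iff₀ hDδ hDpos]
          nlinarith
        have hsplit : ε * δ / (nS * (nT + δ - 1)) = (ε / nS) * (δ / (nT + δ - 1)) := by
          field_simp
        rw [hsplit]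
        have h1' : (0:ℝ) ≤ ε / nS := div_nonneg hε0 (by linarith)
        have h2' : (0:ℝ) ≤ δ / (nT + δ - 1) := div_nonneg hδ0 hDδ.le
        calc (ε / nS) * (δ / (nT + δ - 1)) ≤ (ε / nS) * t :=
              mul_le_mul_of_nonneg_left hmono h1'
          _ ≤ ‖w‖ * t := mul_le_mul_of_nonneg_right hwn ht0
          _ = t * ‖w‖ := mul_comm _ _
      have hfin : localModulusOfConvexity y (ε * δ / (nS * (nT + δ - 1))) ≤ d :=
        lmoc_le y _ d hd0 (t • w) hlow hnorm1 hnorm2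
      have hmin : η' ≤ η := min_le_left _ _
      linarith
end

section
/- Let X be an asymptotically transitive Banach space. Then for every s ∈ (0,1) and all x, y ∈ S_X, lim_{t→s⁻} Δ_X(x,t) = lim_{t→s⁻} Δ_X(y,t); i.e., the local moduli of convexity at any two unit vectors agree except possibly at countably many ε. -/
/-!
If `T x = y` with `‖T‖ ≤ 1 + ε` and `‖T⁻¹‖ ≤ 1 + ε`, then `T⁻¹ / (1 + ε)` carries every
witness `(λ, v)` for `Δ(y, (1 + ε)² t)` to a witness `(λ / (1 + ε), T⁻¹ v / (1 + ε))` for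
`Δ(x, t)`, so `Δ(x, t) ≤ Δ(y, (1 + ε)² t) + ε`. For `t < s` and `ε` small, `(1 + ε)² t < s`,
so letting `ε → 0` bounds `Δ(x, t)` by the left limit of `Δ(y, ·)` at `s`, and by symmetry
the two left limits coincide.
-/

open Filter Topology Set

section LocalModulusOfConvexity

variable {X Y : Type*} [NormedAddCommGroup X] [NormedSpace ℝ X]
  [NormedAddCommGroup Y] [NormedSpace ℝ Y]

theorem localModulusOfConvexity_nonneg (z : X) (ε : ℝ) : 0 ≤ localModulusOfConvexity z ε :=
  Real.sInf_nonneg fun _ hd => hd.1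

theorem localModulusOfConvexity_le {z : X} {ε d : ℝ} (hd : 0 ≤ d) (v : X) (hv : ε ≤ ‖v‖)
    (hadd : ‖(1 - d) • z + v‖ ≤ 1) (hsub : ‖(1 - d) • z - v‖ ≤ 1) :
    localModulusOfConvexity z ε ≤ d :=
  csInf_le ⟨0, fun _ hd => hd.1⟩ ⟨hd, v, hv, hadd, hsub⟩

theorem exists_le_norm_le_one {z : X} (hz : ‖z‖ = 1) {ε : ℝ} (hε : ε ≤ 1) :
    ∃ v : X, ε ≤ ‖v‖ ∧ ‖v‖ ≤ 1 := by
  refine ⟨max ε 0 • z, ?_⟩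
  rw [norm_smul, hz, mul_one, Real.norm_of_nonneg (le_max_right ε 0)]
  exact ⟨le_max_left ε 0, max_le hε zero_le_one⟩

theorem localModulusOfConvexity_le_one {z : X} (hz : ‖z‖ = 1) {ε : ℝ} (hε : ε ≤ 1) :
    localModulusOfConvexity z ε ≤ 1 := by
  obtain ⟨v, hv, hv1⟩ := exists_le_norm_le_one hz hε
  refine localModulusOfConvexity_le zero_le_one v hv ?_ ?_
  · rwa [sub_self, zero_smul, zero_add]
  · rwa [sub_self, zero_smul, zero_sub, norm_neg]

theorem le_localModulusOfConvexity {z : X} (hz : ‖z‖ = 1) {ε b : ℝ} (hε : ε ≤ 1)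
    (h : ∀ d, 0 ≤ d → ∀ v : X, ε ≤ ‖v‖ → ‖(1 - d) • z + v‖ ≤ 1 → ‖(1 - d) • z - v‖ ≤ 1 →
      b ≤ d) :
    b ≤ localModulusOfConvexity z ε := by
  refine le_csInf ?_ fun d ⟨hd, v, hv, hadd, hsub⟩ => h d hd v hv hadd hsub
  obtain ⟨v, hv, hv1⟩ := exists_le_norm_le_one hz hε
  refine ⟨1, zero_le_one, v, hv, ?_, ?_⟩
  · rwa [sub_self, zero_smul, zero_add]
  · rwa [sub_self, zero_smul, zero_sub, norm_neg]

theorem one_sub_localModulusOfConvexity_le_of_continuousLinearEquiv (T : X ≃L[ℝ] Y)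
    {x : X} {y : Y} (hxy : T x = y) (hy : ‖y‖ = 1) {a b t : ℝ} (ha : 1 ≤ a) (hb : 0 < b)
    (hT : ‖(T : X →L[ℝ] Y)‖ ≤ b) (hTsymm : ‖(T.symm : Y →L[ℝ] X)‖ ≤ a) (ht : a * b * t ≤ 1) :
    1 - localModulusOfConvexity y (a * b * t) ≤ a * (1 - localModulusOfConvexity x t) := by
  have ha₀ : 0 < a := zero_lt_one.trans_le ha
  have hx : T.symm y = x := by rw [← hxy, T.symm_apply_apply]
  have contract : ∀ w : Y, ‖a⁻¹ • T.symm w‖ ≤ ‖w‖ := fun w => by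
    rw [norm_smul, Real.norm_of_nonneg (inv_nonneg.2 ha₀.le), inv_mul_le_iff₀ ha₀]
    exact (T.symm : Y →L[ℝ] X).le_of_opNorm_le hTsymm w
  refine sub_le_comm.1 (le_localModulusOfConvexity hy ht fun d hd v hv hadd hsub => ?_)
  have hscale : 1 - (1 - (1 - d) / a) = a⁻¹ * (1 - d) := by rw [sub_sub_cancel, div_eq_inv_mul]
  have hΔ : localModulusOfConvexity x t ≤ 1 - (1 - d) / a := by
    refine localModulusOfConvexity_le ?_ (a⁻¹ • T.symm v) ?_ ?_ ?_
    · rw [sub_nonneg, div_le_one ha₀]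
      linarith
    · have hTv : ‖v‖ ≤ b * ‖T.symm v‖ := by
        simpa using (T : X →L[ℝ] Y).le_of_opNorm_le hT (T.symm v)
      rw [norm_smul, Real.norm_of_nonneg (inv_nonneg.2 ha₀.le), le_inv_mul_iff₀ ha₀]
      nlinarith
    · simpa only [map_add, map_smul, hx, smul_add, smul_smul, hscale]
        using (contract _).trans hadd
    · simpa only [map_sub, map_smul, hx, smul_sub, smul_smul, hscale]
        using (contract _).trans hsub
  rw [le_sub_comm, div_le_iff₀ ha₀] at hΔ
  linarith

theorem localModulusOfConvexity_le_of_forall_almostIsometry {x : X} {y : Y} (hy : ‖y‖ = 1)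
    (hxy : ∀ ε > 0, ∃ T : X ≃L[ℝ] Y,
      T x = y ∧ ‖(T : X →L[ℝ] Y)‖ ≤ 1 + ε ∧ ‖(T.symm : Y →L[ℝ] X)‖ ≤ 1 + ε)
    {s t M : ℝ} (hs : s ≤ 1) (ht : t ∈ Ico 0 s)
    (hM : ∀ u ∈ Ico 0 s, localModulusOfConvexity y u ≤ M) :
    localModulusOfConvexity x t ≤ M := by
  have hsmall : ∀ᶠ ε in 𝓝[>] (0 : ℝ), 0 < ε ∧ (1 + ε) * (1 + ε) * t < s := by
    refine eventually_mem_nhdsWithin.and (nhdsWithin_le_nhds ?_)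
    refine Tendsto.eventually_lt_const ht.2 ?_
    exact (by fun_prop : Continuous fun ε : ℝ => (1 + ε) * (1 + ε) * t).tendsto' 0 t (by ring)
  have hlim : Tendsto (fun ε => M + ε) (𝓝[>] 0) (𝓝 M) :=
    tendsto_nhdsWithin_of_tendsto_nhds ((continuous_const_add M).tendsto' 0 M (add_zero M))
  refine ge_of_tendsto hlim ?_
  filter_upwards [hsmall] with ε ⟨hε, hεt⟩
  obtain ⟨T, hTxy, hT, hTsymm⟩ := hxy ε hε
  have htransfer := one_sub_localModulusOfConvexity_le_of_continuousLinearEquiv T hTxy hy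
    (by linarith) (by linarith) hT hTsymm (hεt.le.trans hs)
  have hMy := hM _ ⟨by nlinarith [ht.1], hεt⟩
  nlinarith [mul_nonneg hε.le (localModulusOfConvexity_nonneg x t)]

end LocalModulusOfConvexity

theorem stmt_12_general {X : Type*} [NormedAddCommGroup X] [NormedSpace ℝ X]
    (hAT : ∀ x y : X, ‖x‖ = 1 → ‖y‖ = 1 → ∀ ε > 0, ∃ T : X ≃L[ℝ] X,
      T x = y ∧ ‖(T : X →L[ℝ] X)‖ ≤ 1 + ε ∧ ‖(T.symm : X →L[ℝ] X)‖ ≤ 1 + ε) :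
    ∀ s : ℝ, 0 < s → s < 1 → ∀ x y : X, ‖x‖ = 1 → ‖y‖ = 1 →
      sSup (localModulusOfConvexity x '' Set.Ico 0 s) =
        sSup (localModulusOfConvexity y '' Set.Ico 0 s) := by
  intro s hs0 hs1
  suffices H : ∀ x y : X, ‖x‖ = 1 → ‖y‖ = 1 →
      sSup (localModulusOfConvexity x '' Ico 0 s) ≤ sSup (localModulusOfConvexity y '' Ico 0 s)
    from fun x y hx hy => le_antisymm (H x y hx hy) (H y x hy hx)
  intro x y hx hy
  have hbdd : BddAbove (localModulusOfConvexity y '' Ico 0 s) :=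
    ⟨1, by rintro _ ⟨u, hu, rfl⟩; exact localModulusOfConvexity_le_one hy (hu.2.trans hs1).le⟩
  refine csSup_le ((nonempty_Ico.2 hs0).image _) ?_
  rintro _ ⟨t, ht, rfl⟩
  exact localModulusOfConvexity_le_of_forall_almostIsometry hy (hAT x y hx hy) hs1.le ht
    fun u hu => le_csSup hbdd (mem_image_of_mem _ hu)

/-- The left limit at `s` of the non-decreasing map `t ↦ Δ_X(x,t)` is the same for all
unit vectors `x`, when `X` is asymptotically transitive. -/
theorem stmt_12 {X : Type*} [NormedAddCommGroup X] [NormedSpace ℝ X] [CompleteSpace X]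
    (hAT : ∀ x y : X, ‖x‖ = 1 → ‖y‖ = 1 → ∀ ε > 0, ∃ T : X ≃L[ℝ] X,
      T x = y ∧ ‖(T : X →L[ℝ] X)‖ ≤ 1 + ε ∧ ‖(T.symm : X →L[ℝ] X)‖ ≤ 1 + ε) :
    ∀ s : ℝ, 0 < s → s < 1 → ∀ x y : X, ‖x‖ = 1 → ‖y‖ = 1 →
      sSup (localModulusOfConvexity x '' Set.Ico 0 s) =
        sSup (localModulusOfConvexity y '' Set.Ico 0 s) :=
  stmt_12_general hAT
end

section
/- Let X be an asymptotically transitive Banach space whose unit ball is dentable, i.e., inf over f ∈ S_{X*} and 0<α<1 of diam{x ∈ B_X : f(x) ≥ α} is 0. Then X is uniformly convex. -/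
/-!
Given `ε`, take a slice `S(f, α)` of diameter `< ε / 2` and put `δ = (1 - α) / 16`. If
`‖x + y‖ > 2 - 2δ`, move the direction of `x + y` by an almost isometry `T` onto a unit vector
`w` with `f w > 1 - δ`. Then `f (T x) + f (T y) = ‖x + y‖ f w` is close to `2`, while each term
is at most `‖T‖`, so both terms are large and `T x, T y` lie, after rescaling by `‖T‖`, in the
slice. Hence `‖x - y‖ ≤ ‖T⁻¹‖ ‖T‖ diam S(f, α) < ε`.
-/

open Metric

section

variable {X : Type*} [NormedAddCommGroup X] [NormedSpace ℝ X]

variable (X) in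
def AsymptoticallyTransitive : Prop :=
  ∀ x y : X, ‖x‖ = 1 → ‖y‖ = 1 → ∀ ε > 0, ∃ T : X ≃L[ℝ] X,
    T x = y ∧ ‖(T : X →L[ℝ] X)‖ ≤ 1 + ε ∧ ‖(T.symm : X →L[ℝ] X)‖ ≤ 1 + ε

def slice (f : X →L[ℝ] ℝ) (α : ℝ) : Set X := {x | ‖x‖ ≤ 1 ∧ α ≤ f x}

lemma isBounded_slice (f : X →L[ℝ] ℝ) (α : ℝ) : Bornology.IsBounded (slice f α) :=
  isBounded_closedBall.subset fun _ hx ↦ mem_closedBall_zero_iff.2 hx.1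

lemma inv_smul_mem_slice {f : X →L[ℝ] ℝ} {α c : ℝ} (hc : 0 < c) {u : X} (hu : ‖u‖ ≤ c)
    (hfu : α * c ≤ f u) : c⁻¹ • u ∈ slice f α := by
  refine ⟨?_, ?_⟩
  · rw [norm_smul, Real.norm_of_nonneg (inv_nonneg.2 hc.le), inv_mul_le_iff₀ hc, mul_one]
    exact hu
  · rw [map_smul, smul_eq_mul, le_inv_mul_iff₀ hc, mul_comm]
    exact hfu

lemma norm_sub_le_mul_diam_slice {f : X →L[ℝ] ℝ} {α c : ℝ} (hc : 0 < c) {u v : X}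
    (hu : ‖u‖ ≤ c) (hv : ‖v‖ ≤ c) (hfu : α * c ≤ f u) (hfv : α * c ≤ f v) :
    ‖u - v‖ ≤ c * diam (slice f α) := by
  have hdist := dist_le_diam_of_mem (isBounded_slice f α)
    (inv_smul_mem_slice hc hu hfu) (inv_smul_mem_slice hc hv hfv)
  calc ‖u - v‖ = c * dist (c⁻¹ • u) (c⁻¹ • v) := by
        rw [dist_eq_norm, ← smul_sub, norm_smul, Real.norm_of_nonneg (inv_nonneg.2 hc.le),
          mul_inv_cancel_left₀ hc.ne']
    _ ≤ c * diam (slice f α) := by gcongr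

lemma norm_sub_le_sq_mul_diam_slice {f : X →L[ℝ] ℝ} {α c : ℝ} (hc : 0 < c) (T : X ≃L[ℝ] X)
    (hT : ‖(T : X →L[ℝ] X)‖ ≤ c) (hTsymm : ‖(T.symm : X →L[ℝ] X)‖ ≤ c) {x y : X}
    (hx : ‖x‖ ≤ 1) (hy : ‖y‖ ≤ 1) (hfx : α * c ≤ f (T x)) (hfy : α * c ≤ f (T y)) :
    ‖x - y‖ ≤ c ^ 2 * diam (slice f α) := by
  have hTv : ∀ v : X, ‖v‖ ≤ 1 → ‖T v‖ ≤ c := fun v hv ↦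
    (T : X →L[ℝ] X).le_of_opNorm_le_of_le hT hv |>.trans_eq (mul_one c)
  calc ‖x - y‖ = ‖(T.symm : X →L[ℝ] X) (T x - T y)‖ := by simp
    _ ≤ c * ‖T x - T y‖ := (T.symm : X →L[ℝ] X).le_of_opNorm_le hTsymm _
    _ ≤ c * (c * diam (slice f α)) := by
        gcongr
        exact norm_sub_le_mul_diam_slice hc (hTv x hx) (hTv y hy) hfx hfy
    _ = c ^ 2 * diam (slice f α) := by ring

lemma exists_norm_eq_one_lt_apply (f : X →L[ℝ] ℝ) {r : ℝ} (hr₀ : 0 ≤ r) (hr : r < ‖f‖) :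
    ∃ w : X, ‖w‖ = 1 ∧ r < f w := by
  lift r to NNReal using hr₀
  obtain ⟨u, hu, hfu⟩ := f.exists_nnnorm_eq_one_lt_apply_of_lt_opNNNorm (r := r) hr
  rw [← NNReal.coe_lt_coe, coe_nnnorm, Real.norm_eq_abs] at hfu
  rcases le_or_gt 0 (f u) with hpos | hneg
  · exact ⟨u, by simpa using congrArg NNReal.toReal hu, by rwa [abs_of_nonneg hpos] at hfu⟩
  · exact ⟨-u, by simpa using congrArg NNReal.toReal hu, by rwa [abs_of_neg hneg, ← map_neg] at hfu⟩

lemma norm_sub_le_two_mul_diam_slice (hAT : AsymptoticallyTransitive X) {f : X →L[ℝ] ℝ}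
    (hf : ‖f‖ = 1) {α : ℝ} (hα₀ : 0 < α) (hα₁ : α < 1) {x y : X} (hx : ‖x‖ ≤ 1) (hy : ‖y‖ ≤ 1)
    (hxy : 2 - (1 - α) / 8 < ‖x + y‖) :
    ‖x - y‖ ≤ 2 * diam (slice f α) := by
  -- constants chosen so that `(1 + α) c ≤ (2 - 2δ)(1 - δ)` and `c ^ 2 ≤ 2`
  set δ := (1 - α) / 16 with hδ
  set c := 1 + (1 - α) / 4 with hc
  obtain ⟨w, hw, hfw⟩ := exists_norm_eq_one_lt_apply f (r := 1 - δ) (by linarith)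
    (by rw [hf]; linarith)
  have hs : 0 < ‖x + y‖ := by linarith
  have hz : ‖‖x + y‖⁻¹ • (x + y)‖ = 1 := by
    rw [norm_smul, norm_inv, norm_norm, inv_mul_cancel₀ hs.ne']
  obtain ⟨T, hTw, hT, hTsymm⟩ := hAT _ w hz hw ((1 - α) / 4) (by linarith)
  have hsum : f (T x) + f (T y) = ‖x + y‖ * f w := by
    rw [← hTw, map_smul, map_smul, smul_eq_mul, map_add, map_add, mul_inv_cancel_left₀ hs.ne']
  have hfT : ∀ v : X, ‖v‖ ≤ 1 → f (T v) ≤ c := fun v hv ↦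
    calc f (T v) ≤ ‖f‖ * ‖T v‖ := (le_abs_self _).trans (f.le_opNorm _)
      _ ≤ 1 * (c * 1) := by
          gcongr
          · exact hf.le
          · exact (T : X →L[ℝ] X).le_of_opNorm_le_of_le hT hv
      _ = c := by ring
  have hsum_ge : (1 + α) * c ≤ f (T x) + f (T y) := by
    rw [hsum]
    calc (1 + α) * c ≤ (2 - 2 * δ) * (1 - δ) := by rw [hδ, hc]; nlinarith
      _ ≤ ‖x + y‖ * f w := by gcongr <;> linarith
  calc ‖x - y‖ ≤ c ^ 2 * diam (slice f α) :=
        norm_sub_le_sq_mul_diam_slice (c := c) (by positivity) T hT hTsymm hx hy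
          (by linarith [hfT y hy]) (by linarith [hfT x hx])
    _ ≤ 2 * diam (slice f α) := by
        gcongr
        rw [hc]
        nlinarith

end

theorem stmt_13_general {X : Type*} [NormedAddCommGroup X] [NormedSpace ℝ X]
    (hAT : ∀ x y : X, ‖x‖ = 1 → ‖y‖ = 1 → ∀ ε > 0, ∃ T : X ≃L[ℝ] X,
      T x = y ∧ ‖(T : X →L[ℝ] X)‖ ≤ 1 + ε ∧ ‖(T.symm : X →L[ℝ] X)‖ ≤ 1 + ε)
    (hdent : ∀ ε > 0, ∃ f : X →L[ℝ] ℝ, ‖f‖ = 1 ∧ ∃ α : ℝ, 0 < α ∧ α < 1 ∧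
      Metric.diam {x : X | ‖x‖ ≤ 1 ∧ α ≤ f x} < ε) :
    ∀ ε > 0, ∃ δ > 0, ∀ x y : X, ‖x‖ ≤ 1 → ‖y‖ ≤ 1 → ε ≤ ‖x - y‖ →
      ‖x + y‖ / 2 ≤ 1 - δ := by
  intro ε hε
  obtain ⟨f, hf, α, hα₀, hα₁, hdiam⟩ := hdent (ε / 2) (half_pos hε)
  have hdiam : diam (slice f α) < ε / 2 := hdiam
  refine ⟨(1 - α) / 16, by linarith, fun x y hx hy hεxy ↦ ?_⟩
  by_contra! hfar
  have := norm_sub_le_two_mul_diam_slice hAT hf hα₀ hα₁ hx hy (by linarith)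
  linarith

theorem stmt_13 {X : Type*} [NormedAddCommGroup X] [NormedSpace ℝ X] [CompleteSpace X]
    (hAT : ∀ x y : X, ‖x‖ = 1 → ‖y‖ = 1 → ∀ ε > 0, ∃ T : X ≃L[ℝ] X,
      T x = y ∧ ‖(T : X →L[ℝ] X)‖ ≤ 1 + ε ∧ ‖(T.symm : X →L[ℝ] X)‖ ≤ 1 + ε)
    (hdent : ∀ ε > 0, ∃ f : X →L[ℝ] ℝ, ‖f‖ = 1 ∧ ∃ α : ℝ, 0 < α ∧ α < 1 ∧
      Metric.diam {x : X | ‖x‖ ≤ 1 ∧ α ≤ f x} < ε) :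
    ∀ ε > 0, ∃ δ > 0, ∀ x y : X, ‖x‖ ≤ 1 → ‖y‖ ≤ 1 → ε ≤ ‖x - y‖ →
      ‖x + y‖ / 2 ≤ 1 - δ :=
  stmt_13_general hAT hdent
end

section
/- Let X be an asymptotically transitive Banach space whose dual unit ball is w*-dentable. Then the dual X* is asymptotically transitive. -/
open ContinuousLinearMap

noncomputable def precompCLM {X : Type*} [NormedAddCommGroup X] [NormedSpace ℝ X]
    (S : X →L[ℝ] X) : (X →L[ℝ] ℝ) →L[ℝ] (X →L[ℝ] ℝ) :=
  (ContinuousLinearMap.compL ℝ X X ℝ).flip S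

lemma precompCLM_apply {X : Type*} [NormedAddCommGroup X] [NormedSpace ℝ X]
    (S : X →L[ℝ] X) (φ : X →L[ℝ] ℝ) : precompCLM S φ = φ.comp S := rfl

lemma norm_precompCLM_le {X : Type*} [NormedAddCommGroup X] [NormedSpace ℝ X]
    (S : X →L[ℝ] X) : ‖precompCLM S‖ ≤ ‖S‖ :=
  opNorm_le_bound _ (norm_nonneg _) fun φ => by
    rw [precompCLM_apply, mul_comm]; exact opNorm_comp_le φ S

noncomputable def precompEquiv {X : Type*} [NormedAddCommGroup X] [NormedSpace ℝ X]
    (S : X ≃L[ℝ] X) : (X →L[ℝ] ℝ) ≃L[ℝ] (X →L[ℝ] ℝ) :=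
  ContinuousLinearEquiv.equivOfInverse (precompCLM (S : X →L[ℝ] X))
    (precompCLM (S.symm : X →L[ℝ] X))
    (fun φ => by ext x; simp [precompCLM_apply])
    (fun φ => by ext x; simp [precompCLM_apply])

lemma precompEquiv_apply {X : Type*} [NormedAddCommGroup X] [NormedSpace ℝ X]
    (S : X ≃L[ℝ] X) (φ : X →L[ℝ] ℝ) : precompEquiv S φ = φ.comp (S : X →L[ℝ] X) := rfl

lemma precompEquiv_symm {X : Type*} [NormedAddCommGroup X] [NormedSpace ℝ X]
    (S : X ≃L[ℝ] X) : (precompEquiv S).symm = precompEquiv S.symm := rfl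

lemma norm_precompEquiv_le {X : Type*} [NormedAddCommGroup X] [NormedSpace ℝ X]
    (S : X ≃L[ℝ] X) :
    ‖(precompEquiv S : (X →L[ℝ] ℝ) →L[ℝ] (X →L[ℝ] ℝ))‖ ≤ ‖(S : X →L[ℝ] X)‖ :=
  norm_precompCLM_le _

set_option linter.unreachableTactic false in
set_option linter.unusedTactic false in
noncomputable def rankOneEquiv {E : Type*} [NormedAddCommGroup E] [NormedSpace ℝ E]
    (ψ : E →L[ℝ] ℝ) (d : E) (h : 1 + ψ d ≠ 0) : E ≃L[ℝ] E :=
  ContinuousLinearEquiv.equivOfInverse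
    (ContinuousLinearMap.id ℝ E + ψ.smulRight d)
    (ContinuousLinearMap.id ℝ E - ((1 + ψ d)⁻¹ • ψ).smulRight d)
    (fun φ => by
      simp only [add_apply, sub_apply, coe_id', id_eq, smulRight_apply, coe_smul', Pi.smul_apply,
        map_add, map_smul, smul_eq_mul]
      match_scalars <;> field_simp <;> ring)
    (fun φ => by
      simp only [add_apply, sub_apply, coe_id', id_eq, smulRight_apply, coe_smul', Pi.smul_apply,
        map_sub, map_smul, smul_eq_mul]
      match_scalars <;> field_simp <;> ring)

lemma rankOneEquiv_apply {E : Type*} [NormedAddCommGroup E] [NormedSpace ℝ E]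
    (ψ : E →L[ℝ] ℝ) (d : E) (h : 1 + ψ d ≠ 0) (φ : E) :
    rankOneEquiv ψ d h φ = φ + ψ φ • d := rfl

lemma norm_rankOneEquiv_le {E : Type*} [NormedAddCommGroup E] [NormedSpace ℝ E]
    (ψ : E →L[ℝ] ℝ) (d : E) (h : 1 + ψ d ≠ 0) :
    ‖(rankOneEquiv ψ d h : E →L[ℝ] E)‖ ≤ 1 + ‖ψ‖ * ‖d‖ := by
  have : (rankOneEquiv ψ d h : E →L[ℝ] E) = ContinuousLinearMap.id ℝ E + ψ.smulRight d := rfl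
  rw [this]
  refine (opNorm_add_le _ _).trans ?_
  rw [norm_smulRight_apply]
  have : ‖ContinuousLinearMap.id ℝ E‖ ≤ 1 := norm_id_le
  linarith

lemma norm_rankOneEquiv_symm_le {E : Type*} [NormedAddCommGroup E] [NormedSpace ℝ E]
    (ψ : E →L[ℝ] ℝ) (d : E) (h : 1 + ψ d ≠ 0) :
    ‖((rankOneEquiv ψ d h).symm : E →L[ℝ] E)‖ ≤ 1 + |1 + ψ d|⁻¹ * (‖ψ‖ * ‖d‖) := by
  have : ((rankOneEquiv ψ d h).symm : E →L[ℝ] E)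
      = ContinuousLinearMap.id ℝ E - ((1 + ψ d)⁻¹ • ψ).smulRight d := rfl
  rw [this]
  refine (norm_sub_le _ _).trans ?_
  rw [norm_smulRight_apply, norm_smul, norm_inv, Real.norm_eq_abs]
  have : ‖ContinuousLinearMap.id ℝ E‖ ≤ 1 := norm_id_le
  rw [mul_assoc]
  linarith

lemma norm_trans_le' {E F G : Type*} [NormedAddCommGroup E] [NormedSpace ℝ E]
    [NormedAddCommGroup F] [NormedSpace ℝ F] [NormedAddCommGroup G] [NormedSpace ℝ G]
    (e : E ≃L[ℝ] F) (e' : F ≃L[ℝ] G) :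
    ‖((e.trans e') : E →L[ℝ] G)‖ ≤ ‖(e' : F →L[ℝ] G)‖ * ‖(e : E →L[ℝ] F)‖ := by
  have h : ((e.trans e') : E →L[ℝ] G) = (e' : F →L[ℝ] G).comp (e : E →L[ℝ] F) := rfl
  rw [h]; exact ContinuousLinearMap.opNorm_comp_le _ _

lemma arith1 {ε ε' x y : ℝ} (h0 : 0 ≤ ε') (h1 : ε' ≤ 1) (h2 : ε' ≤ ε)
    (hx : 0 ≤ x) (hxb : x ≤ ε' / 100) (hy : 0 ≤ y) (hyb : y ≤ 2 * ε' / 47) :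
    (1 + x) * (1 + y) * (1 + x) ≤ 1 + ε := by
  have hx1 : x ≤ 1 / 100 := by linarith
  have hxy : x * y ≤ (1 / 100) * (2 * ε' / 47) := mul_le_mul hx1 hyb hy (by norm_num)
  have hxx : x * x ≤ (1 / 100) * (ε' / 100) := mul_le_mul hx1 hxb hx (by norm_num)
  have hxxy : x * (x * y) ≤ (1 / 100) * ((1 / 100) * (2 * ε' / 47)) :=
    mul_le_mul hx1 hxy (mul_nonneg hx hy) (by norm_num)
  nlinarith [hxy, hxx, hxxy]

set_option maxHeartbeats 2000000 in
theorem stmt_14 {X : Type*} [NormedAddCommGroup X] [NormedSpace ℝ X] [CompleteSpace X]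
    (hAT : ∀ x y : X, ‖x‖ = 1 → ‖y‖ = 1 → ∀ ε > 0, ∃ T : X ≃L[ℝ] X,
      T x = y ∧ ‖(T : X →L[ℝ] X)‖ ≤ 1 + ε ∧ ‖(T.symm : X →L[ℝ] X)‖ ≤ 1 + ε)
    (hwdent : ∀ ε > 0, ∃ x : X, ‖x‖ = 1 ∧ ∃ α : ℝ, 0 < α ∧ α < 1 ∧
      Metric.diam {f : X →L[ℝ] ℝ | ‖f‖ ≤ 1 ∧ α ≤ f x} < ε) :
    ∀ f g : X →L[ℝ] ℝ, ‖f‖ = 1 → ‖g‖ = 1 → ∀ ε > 0,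
      ∃ T : (X →L[ℝ] ℝ) ≃L[ℝ] (X →L[ℝ] ℝ), T f = g ∧
        ‖(T : (X →L[ℝ] ℝ) →L[ℝ] (X →L[ℝ] ℝ))‖ ≤ 1 + ε ∧
        ‖(T.symm : (X →L[ℝ] ℝ) →L[ℝ] (X →L[ℝ] ℝ))‖ ≤ 1 + ε := by
  intro f g hf hg ε hε
  have hε'0 : 0 < min ε 1 := lt_min hε one_pos
  set ε' : ℝ := min ε 1 with hε'def
  have hε'1 : ε' ≤ 1 := min_le_right _ _
  have hε'ε : ε' ≤ ε := min_le_left _ _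
  have hδ₁0 : 0 < ε' / 100 := by positivity
  obtain ⟨x, hx, α, hα0, hα1, hdiam⟩ := hwdent (ε' / 100) hδ₁0
  set δ₁ : ℝ := ε' / 100 with hδ₁def
  set δ₂ : ℝ := min δ₁ ((1 - α) / (1 + α)) with hδ₂def
  have hδ₂0 : 0 < δ₂ := lt_min hδ₁0 (div_pos (by linarith) (by linarith))
  have hδ₂a : δ₂ ≤ δ₁ := min_le_left _ _
  have hδ₂b : δ₂ * (1 + α) ≤ 1 - α := by
    have h1 : δ₂ ≤ (1 - α) / (1 + α) := min_le_right _ _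
    have h2 : (0:ℝ) < 1 + α := by linarith
    calc δ₂ * (1 + α) ≤ (1 - α) / (1 + α) * (1 + α) :=
          mul_le_mul_of_nonneg_right h1 h2.le
      _ = 1 - α := div_mul_cancel₀ _ h2.ne'
  have hδ₁e : δ₁ ≤ ε' / 100 := le_of_eq hδ₁def.symm
  have hδ₁1 : δ₁ ≤ 1 / 100 := by rw [hδ₁def]; linarith
  have hδ₂1 : δ₂ ≤ 1 / 100 := hδ₂a.trans hδ₁1
  have hxne : x ≠ 0 := fun h => by simp [h] at hx
  obtain ⟨f₀, hf₀n, hf₀x⟩ := exists_dual_vector ℝ x (norm_ne_zero_iff.mpr hxne)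
  have hf₀x' : f₀ x = 1 := by rw [show f₀ x = ‖x‖ from by exact_mod_cast hf₀x, hx]
  have hbdd : Bornology.IsBounded {φ : X →L[ℝ] ℝ | ‖φ‖ ≤ 1 ∧ α ≤ φ x} := by
    refine (Metric.isBounded_closedBall (x := (0 : X →L[ℝ] ℝ)) (r := 1)).subset ?_
    intro φ hφ
    rw [Metric.mem_closedBall, dist_zero_right]
    exact hφ.1
  have hf₀A : f₀ ∈ {φ : X →L[ℝ] ℝ | ‖φ‖ ≤ 1 ∧ α ≤ φ x} := ⟨hf₀n.le, by rw [hf₀x']; exact hα1.le⟩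
  -- key step: every norm-one functional is moved close to f₀ by some adjoint
  have key : ∀ φ : X →L[ℝ] ℝ, ‖φ‖ = 1 → ∃ S : X ≃L[ℝ] X,
      ‖(S : X →L[ℝ] X)‖ ≤ 1 + δ₂ ∧ ‖(S.symm : X →L[ℝ] X)‖ ≤ 1 + δ₂ ∧
      ‖φ.comp (S.symm : X →L[ℝ] X) - f₀‖ ≤ δ₁ + δ₂ := by
    intro φ hφ
    obtain ⟨u₀, hu₀n, hu₀⟩ := φ.exists_lt_apply_of_lt_opNorm (r := 1 - δ₂) (by rw [hφ]; linarith)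
    have hu₀' : 1 - δ₂ < |φ u₀| := by rwa [Real.norm_eq_abs] at hu₀
    obtain ⟨u₁, hu₁n, hu₁⟩ : ∃ u₁ : X, ‖u₁‖ < 1 ∧ 1 - δ₂ < φ u₁ := by
      rcases le_or_gt 0 (φ u₀) with h | h
      · exact ⟨u₀, hu₀n, by rwa [abs_of_nonneg h] at hu₀'⟩
      · exact ⟨-u₀, by simpa using hu₀n, by rw [map_neg]; rwa [abs_of_neg h] at hu₀'⟩
    have hu₁pos : 0 < φ u₁ := by linarith
    have hu₁ne : u₁ ≠ 0 := fun h => by simp [h] at hu₁pos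
    have hu₁n0 : 0 < ‖u₁‖ := norm_pos_iff.mpr hu₁ne
    have hun : ‖(‖u₁‖⁻¹ • u₁ : X)‖ = 1 := by
      have := norm_smul (‖u₁‖⁻¹) u₁
      rw [this, norm_inv, norm_norm, inv_mul_cancel₀ hu₁n0.ne']
    have hφu : 1 - δ₂ < φ (‖u₁‖⁻¹ • u₁) := by
      have h1 : (1:ℝ) ≤ ‖u₁‖⁻¹ := (one_le_inv₀ hu₁n0).mpr hu₁n.le
      have h2 : φ (‖u₁‖⁻¹ • u₁) = ‖u₁‖⁻¹ * φ u₁ := by rw [map_smul, smul_eq_mul]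
      nlinarith
    obtain ⟨S, hSux, hSn, hSsn⟩ := hAT (‖u₁‖⁻¹ • u₁) x hun hx δ₂ hδ₂0
    refine ⟨S, hSn, hSsn, ?_⟩
    have hhn : ‖φ.comp (S.symm : X →L[ℝ] X)‖ ≤ 1 + δ₂ := by
      calc ‖φ.comp (S.symm : X →L[ℝ] X)‖ ≤ ‖φ‖ * ‖(S.symm : X →L[ℝ] X)‖ := opNorm_comp_le _ _
        _ ≤ 1 + δ₂ := by rw [hφ, one_mul]; exact hSsn
    have hhx : 1 - δ₂ < (φ.comp (S.symm : X →L[ℝ] X)) x := by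
      have hsx : S.symm x = ‖u₁‖⁻¹ • u₁ := by rw [← hSux]; exact S.symm_apply_apply _
      have h2 : (φ.comp (S.symm : X →L[ℝ] X)) x = φ (‖u₁‖⁻¹ • u₁) := by
        rw [comp_apply, ContinuousLinearEquiv.coe_coe, hsx]
      rw [h2]; exact hφu
    have hpos : (0:ℝ) < 1 + δ₂ := by linarith
    have hφ'A : (1 + δ₂)⁻¹ • φ.comp (S.symm : X →L[ℝ] X) ∈
        {ψ : X →L[ℝ] ℝ | ‖ψ‖ ≤ 1 ∧ α ≤ ψ x} := by
      refine ⟨?_, ?_⟩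
      · have h1 := norm_smul ((1 + δ₂)⁻¹) (φ.comp (S.symm : X →L[ℝ] X))
        rw [h1, norm_inv, Real.norm_eq_abs, abs_of_pos hpos]
        rw [inv_mul_le_iff₀ hpos]
        linarith
      · have h2 : ((1 + δ₂)⁻¹ • φ.comp (S.symm : X →L[ℝ] X)) x
            = (1 + δ₂)⁻¹ * (φ.comp (S.symm : X →L[ℝ] X)) x := by
          rw [ContinuousLinearMap.smul_apply, smul_eq_mul]
        rw [h2, le_inv_mul_iff₀ hpos]
        nlinarith
    have hdist : ‖(1 + δ₂)⁻¹ • φ.comp (S.symm : X →L[ℝ] X) - f₀‖ ≤ δ₁ := by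
      have h3 := Metric.dist_le_diam_of_mem hbdd hφ'A hf₀A
      rw [dist_eq_norm] at h3
      linarith
    have hclose : ‖φ.comp (S.symm : X →L[ℝ] X) - (1 + δ₂)⁻¹ • φ.comp (S.symm : X →L[ℝ] X)‖
        ≤ δ₂ := by
      have heq : φ.comp (S.symm : X →L[ℝ] X) - (1 + δ₂)⁻¹ • φ.comp (S.symm : X →L[ℝ] X)
          = (1 - (1 + δ₂)⁻¹) • φ.comp (S.symm : X →L[ℝ] X) := by
        ext y
        simp only [ContinuousLinearMap.sub_apply, ContinuousLinearMap.smul_apply, smul_eq_mul]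
        ring
      rw [heq]
      have h4 := norm_smul (1 - (1 + δ₂)⁻¹) (φ.comp (S.symm : X →L[ℝ] X))
      rw [h4, Real.norm_eq_abs]
      have h5 : (1 + δ₂)⁻¹ ≤ 1 := by
        rw [inv_le_one_iff₀]; right; linarith
      have h6 : (1 + δ₂) * (1 - (1 + δ₂)⁻¹) = δ₂ := by field_simp; ring
      have h7 : 0 ≤ 1 - (1 + δ₂)⁻¹ := by linarith
      rw [abs_of_nonneg h7]
      nlinarith [norm_nonneg (φ.comp (S.symm : X →L[ℝ] X))]
    calc ‖φ.comp (S.symm : X →L[ℝ] X) - f₀‖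
        ≤ ‖φ.comp (S.symm : X →L[ℝ] X) - (1 + δ₂)⁻¹ • φ.comp (S.symm : X →L[ℝ] X)‖
          + ‖(1 + δ₂)⁻¹ • φ.comp (S.symm : X →L[ℝ] X) - f₀‖ :=
          norm_sub_le_norm_sub_add_norm_sub _ _ _
      _ ≤ δ₂ + δ₁ := add_le_add hclose hdist
      _ = δ₁ + δ₂ := by ring
  obtain ⟨Sf, hSf1, hSf2, hSf3⟩ := key f hf
  obtain ⟨Sg, hSg1, hSg2, hSg3⟩ := key g hg
  set hF : X →L[ℝ] ℝ := f.comp (Sf.symm : X →L[ℝ] X) with hFdef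
  set hG : X →L[ℝ] ℝ := g.comp (Sg.symm : X →L[ℝ] X) with hGdef
  have hdnorm : ‖hG - hF‖ ≤ 2 * (δ₁ + δ₂) := by
    have h1 : ‖hG - hF‖ ≤ ‖hG - f₀‖ + ‖f₀ - hF‖ := norm_sub_le_norm_sub_add_norm_sub _ _ _
    have h2 : ‖f₀ - hF‖ = ‖hF - f₀‖ := norm_sub_rev _ _
    linarith [hSf3, hSg3]
  have hFnorm : 1 - (δ₁ + δ₂) ≤ ‖hF‖ := by
    have h1 : ‖f₀‖ - ‖hF‖ ≤ ‖f₀ - hF‖ := norm_sub_norm_le _ _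
    have h2 : ‖f₀ - hF‖ = ‖hF - f₀‖ := norm_sub_rev _ _
    linarith [hSf3, hf₀n.le, hf₀n.ge]
  have hsum : δ₁ + δ₂ ≤ ε' / 50 := by linarith
  have hsum1 : δ₁ + δ₂ ≤ 1 / 50 := by linarith
  have hFpos : (0:ℝ) < ‖hF‖ := by linarith
  have hFne : hF ≠ 0 := norm_pos_iff.mp hFpos
  obtain ⟨ψ₀, hψ₀n, hψ₀F⟩ := exists_dual_vector ℝ hF (norm_ne_zero_iff.mpr hFne)
  have hψ₀F' : ψ₀ hF = ‖hF‖ := by exact_mod_cast hψ₀F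
  have hψF : (‖hF‖⁻¹ • ψ₀) hF = 1 := by
    rw [ContinuousLinearMap.smul_apply, hψ₀F', smul_eq_mul, inv_mul_cancel₀ hFpos.ne']
  have hψn : ‖(‖hF‖⁻¹ • ψ₀ : (X →L[ℝ] ℝ) →L[ℝ] ℝ)‖ ≤ 50 / 49 := by
    have h1 := norm_smul (‖hF‖⁻¹) ψ₀
    rw [h1, hψ₀n, mul_one, norm_inv, norm_norm]
    rw [inv_le_comm₀ hFpos (by norm_num : (0:ℝ) < 50/49)]
    linarith
  have hdn : ‖hG - hF‖ ≤ ε' / 25 := by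
    have : 2 * (δ₁ + δ₂) ≤ ε' / 25 := by linarith
    linarith
  have hk : ‖(‖hF‖⁻¹ • ψ₀ : (X →L[ℝ] ℝ) →L[ℝ] ℝ)‖ * ‖hG - hF‖ ≤ 2 * ε' / 49 := by
    calc ‖(‖hF‖⁻¹ • ψ₀ : (X →L[ℝ] ℝ) →L[ℝ] ℝ)‖ * ‖hG - hF‖
        ≤ (50 / 49) * (ε' / 25) := by
          apply mul_le_mul hψn hdn (norm_nonneg _) (by norm_num)
      _ = 2 * ε' / 49 := by ring
  have hψd : |(‖hF‖⁻¹ • ψ₀ : (X →L[ℝ] ℝ) →L[ℝ] ℝ) (hG - hF)| ≤ 2 * ε' / 49 := by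
    have h1 := (‖hF‖⁻¹ • ψ₀ : (X →L[ℝ] ℝ) →L[ℝ] ℝ).le_opNorm (hG - hF)
    rw [Real.norm_eq_abs] at h1
    linarith
  have hψd' : |(‖hF‖⁻¹ • ψ₀ : (X →L[ℝ] ℝ) →L[ℝ] ℝ) (hG - hF)| ≤ 2 / 49 := by
    have : 2 * ε' / 49 ≤ 2 / 49 := by linarith
    linarith
  have habs := abs_le.mp hψd'
  have h1pd : (47:ℝ) / 49 ≤ 1 + (‖hF‖⁻¹ • ψ₀ : (X →L[ℝ] ℝ) →L[ℝ] ℝ) (hG - hF) := by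
    linarith [habs.1]
  have hne : 1 + (‖hF‖⁻¹ • ψ₀ : (X →L[ℝ] ℝ) →L[ℝ] ℝ) (hG - hF) ≠ 0 :=
    ne_of_gt (by linarith)
  set R := rankOneEquiv (‖hF‖⁻¹ • ψ₀) (hG - hF) hne with hRdef
  have hRF : R hF = hG := by
    rw [hRdef, rankOneEquiv_apply, hψF, one_smul, add_sub_cancel]
  have hRn : ‖(R : (X →L[ℝ] ℝ) →L[ℝ] (X →L[ℝ] ℝ))‖ ≤ 1 + 2 * ε' / 49 := by
    refine (norm_rankOneEquiv_le _ _ _).trans ?_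
    linarith
  have hRsn : ‖(R.symm : (X →L[ℝ] ℝ) →L[ℝ] (X →L[ℝ] ℝ))‖ ≤ 1 + 2 * ε' / 47 := by
    refine (norm_rankOneEquiv_symm_le _ _ _).trans ?_
    have h2 : |1 + (‖hF‖⁻¹ • ψ₀ : (X →L[ℝ] ℝ) →L[ℝ] ℝ) (hG - hF)|⁻¹ ≤ 49 / 47 := by
      rw [abs_of_pos (by linarith : (0:ℝ) < 1 + (‖hF‖⁻¹ • ψ₀ : (X →L[ℝ] ℝ) →L[ℝ] ℝ) (hG - hF))]
      rw [inv_le_comm₀ (by linarith) (by norm_num : (0:ℝ) < 49/47)]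
      linarith
    have h3 : 0 ≤ ‖(‖hF‖⁻¹ • ψ₀ : (X →L[ℝ] ℝ) →L[ℝ] ℝ)‖ * ‖hG - hF‖ :=
      mul_nonneg (norm_nonneg _) (norm_nonneg _)
    have h4 : |1 + (‖hF‖⁻¹ • ψ₀ : (X →L[ℝ] ℝ) →L[ℝ] ℝ) (hG - hF)|⁻¹
        * (‖(‖hF‖⁻¹ • ψ₀ : (X →L[ℝ] ℝ) →L[ℝ] ℝ)‖ * ‖hG - hF‖) ≤ (49/47) * (2 * ε' / 49) := by
      apply mul_le_mul h2 hk h3 (by norm_num)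
    have h5 : (49:ℝ)/47 * (2 * ε' / 49) = 2 * ε' / 47 := by ring
    linarith
  refine ⟨(precompEquiv Sf.symm).trans (R.trans (precompEquiv Sg)), ?_, ?_, ?_⟩
  · have e1 : precompEquiv Sf.symm f = hF := rfl
    have e2 : precompEquiv Sg hG = g := by
      rw [precompEquiv_apply, hGdef]
      ext y
      simp
    calc (precompEquiv Sf.symm).trans (R.trans (precompEquiv Sg)) f
        = precompEquiv Sg (R (precompEquiv Sf.symm f)) := rfl
      _ = precompEquiv Sg (R hF) := by rw [e1]
      _ = precompEquiv Sg hG := by rw [hRF]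
      _ = g := e2
  · have h1 := norm_trans_le' (precompEquiv Sf.symm) (R.trans (precompEquiv Sg))
    have h2 := norm_trans_le' R (precompEquiv Sg)
    have hδ₂e : δ₂ ≤ ε' / 100 := hδ₂a.trans hδ₁e
    have h3 : ‖(precompEquiv Sf.symm : (X →L[ℝ] ℝ) →L[ℝ] (X →L[ℝ] ℝ))‖ ≤ 1 + ε' / 100 :=
      ((norm_precompEquiv_le _).trans hSf2).trans (by linarith)
    have h4 : ‖(precompEquiv Sg : (X →L[ℝ] ℝ) →L[ℝ] (X →L[ℝ] ℝ))‖ ≤ 1 + ε' / 100 :=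
      ((norm_precompEquiv_le _).trans hSg1).trans (by linarith)
    have hR' : ‖(R : (X →L[ℝ] ℝ) →L[ℝ] (X →L[ℝ] ℝ))‖ ≤ 1 + 2 * ε' / 47 :=
      hRn.trans (by linarith)
    have h5 : 0 ≤ ‖(R : (X →L[ℝ] ℝ) →L[ℝ] (X →L[ℝ] ℝ))‖ := ContinuousLinearMap.opNorm_nonneg _
    have h6 : 0 ≤ ‖(precompEquiv Sf.symm : (X →L[ℝ] ℝ) →L[ℝ] (X →L[ℝ] ℝ))‖ := ContinuousLinearMap.opNorm_nonneg _
    have h7 : 0 ≤ ‖(precompEquiv Sg : (X →L[ℝ] ℝ) →L[ℝ] (X →L[ℝ] ℝ))‖ := ContinuousLinearMap.opNorm_nonneg _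
    have hstep : ‖((R.trans (precompEquiv Sg)) : (X →L[ℝ] ℝ) →L[ℝ] (X →L[ℝ] ℝ))‖
        * ‖(precompEquiv Sf.symm : (X →L[ℝ] ℝ) →L[ℝ] (X →L[ℝ] ℝ))‖
        ≤ (1 + ε' / 100) * (1 + 2 * ε' / 47) * (1 + ε' / 100) :=
      mul_le_mul (h2.trans (mul_le_mul h4 hR' h5 (by linarith)))
        h3 h6 (mul_nonneg (by linarith) (by linarith))
    exact h1.trans (hstep.trans (arith1 hε'0.le hε'1 hε'ε (by linarith) (le_refl _)
      (by linarith) (le_refl _)))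
  · have hsymm : ((precompEquiv Sf.symm).trans (R.trans (precompEquiv Sg))).symm
        = (precompEquiv Sg).symm.trans (R.symm.trans (precompEquiv Sf.symm).symm) := rfl
    rw [hsymm]
    have h1 := norm_trans_le' (precompEquiv Sg).symm (R.symm.trans (precompEquiv Sf.symm).symm)
    have h2 := norm_trans_le' R.symm (precompEquiv Sf.symm).symm
    have hδ₂e : δ₂ ≤ ε' / 100 := hδ₂a.trans hδ₁e
    have h3 : ‖((precompEquiv Sg).symm : (X →L[ℝ] ℝ) →L[ℝ] (X →L[ℝ] ℝ))‖ ≤ 1 + ε' / 100 := by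
      rw [precompEquiv_symm]
      exact ((norm_precompEquiv_le _).trans hSg2).trans (by linarith)
    have h4 : ‖((precompEquiv Sf.symm).symm : (X →L[ℝ] ℝ) →L[ℝ] (X →L[ℝ] ℝ))‖
        ≤ 1 + ε' / 100 := by
      rw [precompEquiv_symm]
      refine ((norm_precompEquiv_le _).trans ?_)
      rw [ContinuousLinearEquiv.symm_symm]
      exact hSf1.trans (by linarith)
    have h5 : 0 ≤ ‖(R.symm : (X →L[ℝ] ℝ) →L[ℝ] (X →L[ℝ] ℝ))‖ := ContinuousLinearMap.opNorm_nonneg _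
    have h6 : 0 ≤ ‖((precompEquiv Sf.symm).symm : (X →L[ℝ] ℝ) →L[ℝ] (X →L[ℝ] ℝ))‖ :=
      ContinuousLinearMap.opNorm_nonneg _
    have h7 : 0 ≤ ‖((precompEquiv Sg).symm : (X →L[ℝ] ℝ) →L[ℝ] (X →L[ℝ] ℝ))‖ := ContinuousLinearMap.opNorm_nonneg _
    have hRs' : ‖(R.symm : (X →L[ℝ] ℝ) →L[ℝ] (X →L[ℝ] ℝ))‖ ≤ 1 + 2 * ε' / 47 := hRsn
    have hstep : ‖((R.symm.trans (precompEquiv Sf.symm).symm) :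
          (X →L[ℝ] ℝ) →L[ℝ] (X →L[ℝ] ℝ))‖
        * ‖((precompEquiv Sg).symm : (X →L[ℝ] ℝ) →L[ℝ] (X →L[ℝ] ℝ))‖
        ≤ (1 + ε' / 100) * (1 + 2 * ε' / 47) * (1 + ε' / 100) :=
      mul_le_mul (h2.trans (mul_le_mul h4 hRs' h5 (by linarith)))
        h3 h7 (mul_nonneg (by linarith) (by linarith))
    exact h1.trans (hstep.trans (arith1 hε'0.le hε'1 hε'ε (by linarith) (le_refl _)
      (by linarith) (le_refl _)))
end

section
/- For 1 ≤ p < ∞, p ≠ 2, the subspace M^p = {f ∈ L^p(0,1) : ∫₀¹ f dt = 0} is not isometrically isomorphic to any ℓ^p-direct sum N ⊕_p K with both N, K nonzero closed subspaces of M^p realized as pairwise disjointly supported subspaces; in particular M^p is not isometric to N ⊕_p L^p for any nonzero N. -/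
open MeasureTheory
open scoped ENNReal

open Real Set

open Real Set

variable {q : ℝ}

lemma rpow_subadd {x y : ℝ} (hx : 0 ≤ x) (hy : 0 ≤ y) (hr0 : 0 ≤ q) (hr1 : q ≤ 1) :
    (x + y) ^ q ≤ x ^ q + y ^ q := by
  have h := NNReal.rpow_add_le_add_rpow x.toNNReal y.toNNReal hr0 hr1
  have h2 := NNReal.coe_le_coe.2 h
  rwa [NNReal.coe_add, NNReal.coe_rpow, NNReal.coe_rpow, NNReal.coe_rpow, NNReal.coe_add,
    Real.coe_toNNReal x hx, Real.coe_toNNReal y hy] at h2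

lemma one_add_rpow_lt {t s : ℝ} (ht : 0 < t) (hs : 1 < s) : 1 + t ^ s < (1 + t) ^ s := by
  have h1t : (0:ℝ) < 1 + t := by linarith
  have e2 : (1 + t) ^ s = (1 + t) * (1 + t) ^ (s - 1) := by
    nth_rewrite 1 [show s = 1 + (s - 1) by ring]
    rw [Real.rpow_add h1t, Real.rpow_one]
  have hgt1 : (1:ℝ) < (1 + t) ^ (s - 1) := by
    rw [Real.one_lt_rpow_iff_of_pos h1t]
    exact Or.inl ⟨by linarith, by linarith⟩
  have hts : t ^ (s - 1) < (1 + t) ^ (s - 1) :=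
    Real.rpow_lt_rpow ht.le (by linarith) (by linarith)
  have e3 : t ^ s = t * t ^ (s - 1) := by
    nth_rewrite 1 [show s = 1 + (s - 1) by ring]
    rw [Real.rpow_add ht, Real.rpow_one]
  have htpos : 0 < t ^ (s - 1) := Real.rpow_pos_of_pos ht _
  calc 1 + t ^ s = 1 + t * t ^ (s - 1) := by rw [e3]
    _ < (1 + t) ^ (s - 1) + t * (1 + t) ^ (s - 1) := by
        have := mul_lt_mul_of_pos_left hts ht
        linarith
    _ = (1 + t) * (1 + t) ^ (s - 1) := by ring
    _ = (1 + t) ^ s := e2.symm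

/-- Case `1 ≤ q < 2`: on `(0,1]`, `(1+t)^q + (1-t)^q < 2(1+t^q)`. -/
lemma h_lt2 (hq1 : 1 ≤ q) (hq2 : q < 2) {t : ℝ} (ht0 : 0 < t) (ht1 : t ≤ 1) :
    (1 + t) ^ q + (1 - t) ^ q < 2 * (1 + t ^ q) := by
  have hq0 : (0:ℝ) < q := by linarith
  set h : ℝ → ℝ := fun t => 2 * (1 + t ^ q) - (1 + t) ^ q - (1 - t) ^ q with hh
  have hcont : ContinuousOn h (Icc 0 1) := by
    apply ContinuousOn.sub
    apply ContinuousOn.sub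
    · exact continuousOn_const.mul (continuousOn_const.add
        (continuousOn_id.rpow_const (fun x _ => Or.inr hq0.le)))
    · exact (continuousOn_const.add continuousOn_id).rpow_const (fun x _ => Or.inr hq0.le)
    · exact (continuousOn_const.sub continuousOn_id).rpow_const (fun x _ => Or.inr hq0.le)
  have hderiv : ∀ x ∈ Ioo (0:ℝ) 1, 0 < deriv h x := by
    intro x hx
    obtain ⟨hx0, hx1⟩ := hx
    have d1 : HasDerivAt (fun t : ℝ => t ^ q) (q * x ^ (q - 1)) x :=
      Real.hasDerivAt_rpow_const (Or.inl hx0.ne')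
    have d2 : HasDerivAt (fun t : ℝ => (1 + t) ^ q) (1 * q * (1 + x) ^ (q - 1)) x :=
      ((hasDerivAt_id x).const_add 1).rpow_const (Or.inl (by simp only [id_eq]; linarith))
    have d3 : HasDerivAt (fun t : ℝ => (1 - t) ^ q) (-1 * q * (1 - x) ^ (q - 1)) x := by
      have : HasDerivAt (fun t : ℝ => 1 - t) (-1) x := (hasDerivAt_id x).const_sub 1
      exact this.rpow_const (Or.inl (sub_ne_zero.mpr (by linarith)))
    have dh : HasDerivAt h (2 * (q * x ^ (q - 1)) - 1 * q * (1 + x) ^ (q - 1)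
        - -1 * q * (1 - x) ^ (q - 1)) x := by
      exact (((d1.const_add 1).const_mul 2).sub d2).sub d3
    rw [dh.deriv]
    -- positivity: q * (2 x^{q-1} + (1-x)^{q-1} - (1+x)^{q-1}) > 0
    have key : (1 + x) ^ (q - 1) < 2 * x ^ (q - 1) + (1 - x) ^ (q - 1) := by
      have hsub : (1 + x) ^ (q - 1) ≤ 1 + x ^ (q - 1) := by
        have := rpow_subadd (le_refl (0:ℝ) |>.trans zero_le_one) hx0.le
          (by linarith : (0:ℝ) ≤ q - 1) (by linarith : q - 1 ≤ 1)
        simpa [Real.one_rpow] using this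
      have hone : 1 < x ^ (q - 1) + (1 - x) ^ (q - 1) := by
        rcases eq_or_lt_of_le (by linarith : (0:ℝ) ≤ q - 1) with h0 | h0
        · rw [← h0]; norm_num
        · have a1 : x < x ^ (q - 1) := by
            have := Real.rpow_lt_rpow_of_exponent_gt hx0 hx1 (by linarith : q - 1 < 1)
            rwa [Real.rpow_one] at this
          have a2 : 1 - x < (1 - x) ^ (q - 1) := by
            have := Real.rpow_lt_rpow_of_exponent_gt (by linarith : (0:ℝ) < 1 - x)
              (by linarith) (by linarith : q - 1 < 1)
            rwa [Real.rpow_one] at this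
          linarith
      linarith
    nlinarith [Real.rpow_pos_of_pos hx0 (q-1)]
  have hmono : StrictMonoOn h (Icc 0 1) := by
    apply strictMonoOn_of_deriv_pos (convex_Icc 0 1) hcont
    rwa [interior_Icc]
  have h0 : h 0 = 0 := by norm_num [hh, Real.zero_rpow hq0.ne', Real.one_rpow]
  have := hmono (left_mem_Icc.2 zero_le_one) ⟨ht0.le, ht1⟩ ht0
  rw [h0] at this
  simp only [hh] at this
  linarith

/-- Case `q > 2`: on `(0,1]`, `2(1+t^q) < (1+t)^q + (1-t)^q`. -/
lemma h_gt2 (hq2 : 2 < q) {t : ℝ} (ht0 : 0 < t) (ht1 : t ≤ 1) :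
    2 * (1 + t ^ q) < (1 + t) ^ q + (1 - t) ^ q := by
  have hq0 : (0:ℝ) < q := by linarith
  set h : ℝ → ℝ := fun t => (1 + t) ^ q + (1 - t) ^ q - 2 * (1 + t ^ q) with hh
  have hcont : ContinuousOn h (Icc 0 1) := by
    apply ContinuousOn.sub
    apply ContinuousOn.add
    · exact (continuousOn_const.add continuousOn_id).rpow_const (fun x _ => Or.inr hq0.le)
    · exact (continuousOn_const.sub continuousOn_id).rpow_const (fun x _ => Or.inr hq0.le)
    · exact continuousOn_const.mul (continuousOn_const.add
        (continuousOn_id.rpow_const (fun x _ => Or.inr hq0.le)))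
  have hderiv : ∀ x ∈ Ioo (0:ℝ) 1, 0 < deriv h x := by
    intro x hx
    obtain ⟨hx0, hx1⟩ := hx
    have d1 : HasDerivAt (fun t : ℝ => t ^ q) (q * x ^ (q - 1)) x :=
      Real.hasDerivAt_rpow_const (Or.inl hx0.ne')
    have d2 : HasDerivAt (fun t : ℝ => (1 + t) ^ q) (1 * q * (1 + x) ^ (q - 1)) x :=
      ((hasDerivAt_id x).const_add 1).rpow_const (Or.inl (by simp only [id_eq]; linarith))
    have d3 : HasDerivAt (fun t : ℝ => (1 - t) ^ q) (-1 * q * (1 - x) ^ (q - 1)) x := by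
      have : HasDerivAt (fun t : ℝ => 1 - t) (-1) x := (hasDerivAt_id x).const_sub 1
      exact this.rpow_const (Or.inl (sub_ne_zero.mpr (by linarith)))
    have dh : HasDerivAt h (1 * q * (1 + x) ^ (q - 1) + -1 * q * (1 - x) ^ (q - 1)
        - 2 * (q * x ^ (q - 1))) x := (d2.add d3).sub ((d1.const_add 1).const_mul 2)
    rw [dh.deriv]
    have key : 2 * x ^ (q - 1) + (1 - x) ^ (q - 1) < (1 + x) ^ (q - 1) := by
      have a1 : x ^ (q - 1) ≤ x := by
        have := Real.rpow_le_rpow_of_exponent_ge hx0 hx1.le (by linarith : (1:ℝ) ≤ q - 1)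
        rwa [Real.rpow_one] at this
      have a2 : (1 - x) ^ (q - 1) ≤ 1 - x := by
        have := Real.rpow_le_rpow_of_exponent_ge (by linarith : (0:ℝ) < 1 - x)
          (by linarith) (by linarith : (1:ℝ) ≤ q - 1)
        rwa [Real.rpow_one] at this
      have a3 : 1 + x ^ (q - 1) < (1 + x) ^ (q - 1) :=
        one_add_rpow_lt hx0 (by linarith)
      linarith
    nlinarith [Real.rpow_pos_of_pos hx0 (q-1)]
  have hmono : StrictMonoOn h (Icc 0 1) := by
    apply strictMonoOn_of_deriv_pos (convex_Icc 0 1) hcont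
    rwa [interior_Icc]
  have h0 : h 0 = 0 := by norm_num [hh, Real.zero_rpow hq0.ne', Real.one_rpow]
  have := hmono (left_mem_Icc.2 zero_le_one) ⟨ht0.le, ht1⟩ ht0
  rw [h0] at this
  simp only [hh] at this
  linarith

/-- normalized version, `0 ≤ b ≤ a`, `q < 2`. -/
lemma core_lt2 (hq1 : 1 ≤ q) (hq2 : q < 2) {a b : ℝ} (hb : 0 ≤ b) (hba : b ≤ a) :
    (a + b) ^ q + (a - b) ^ q ≤ 2 * (a ^ q + b ^ q) ∧
      (0 < b → (a + b) ^ q + (a - b) ^ q < 2 * (a ^ q + b ^ q)) := by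
  have hq0 : (0:ℝ) < q := by linarith
  have ha : 0 ≤ a := hb.trans hba
  rcases eq_or_lt_of_le ha with h0 | h0
  · have hb0 : b = 0 := le_antisymm (h0 ▸ hba) hb
    constructor
    · simp [hb0, ← h0, Real.zero_rpow hq0.ne']
    · intro hbp; exact absurd hb0 (by linarith)
  · obtain ⟨t, ht0, ht1, hbt⟩ : ∃ t, 0 ≤ t ∧ t ≤ 1 ∧ b = a * t :=
      ⟨b / a, div_nonneg hb h0.le, div_le_one_of_le₀ hba h0.le, by field_simp⟩
    have hab : a + b = a * (1 + t) := by rw [hbt]; ring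
    have hab' : a - b = a * (1 - t) := by rw [hbt]; ring
    have e1 : (a + b) ^ q = a ^ q * (1 + t) ^ q := by
      rw [hab, Real.mul_rpow h0.le (by linarith)]
    have e2 : (a - b) ^ q = a ^ q * (1 - t) ^ q := by
      rw [hab', Real.mul_rpow h0.le (by linarith)]
    have e3 : b ^ q = a ^ q * t ^ q := by
      rw [hbt, Real.mul_rpow h0.le ht0]
    have hapos : 0 < a ^ q := Real.rpow_pos_of_pos h0 q
    constructor
    · rcases eq_or_lt_of_le ht0 with ht | ht
      · have hb0 : b = 0 := by rw [hbt, ← ht, mul_zero]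
        simp only [hb0, add_zero, sub_zero, Real.zero_rpow hq0.ne']
        linarith
      · have := h_lt2 hq1 hq2 ht ht1
        rw [e1, e2, e3]
        nlinarith
    · intro hbp
      have ht : 0 < t := by
        rcases eq_or_lt_of_le ht0 with h | h
        · exfalso; rw [hbt, ← h, mul_zero] at hbp; exact lt_irrefl _ hbp
        · exact h
      have := h_lt2 hq1 hq2 ht ht1
      rw [e1, e2, e3]
      nlinarith

lemma core_gt2 (hq2 : 2 < q) {a b : ℝ} (hb : 0 ≤ b) (hba : b ≤ a) :
    2 * (a ^ q + b ^ q) ≤ (a + b) ^ q + (a - b) ^ q ∧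
      (0 < b → 2 * (a ^ q + b ^ q) < (a + b) ^ q + (a - b) ^ q) := by
  have hq0 : (0:ℝ) < q := by linarith
  have ha : 0 ≤ a := hb.trans hba
  rcases eq_or_lt_of_le ha with h0 | h0
  · have hb0 : b = 0 := le_antisymm (h0 ▸ hba) hb
    constructor
    · simp [hb0, ← h0, Real.zero_rpow hq0.ne']
    · intro hbp; exact absurd hb0 (by linarith)
  · obtain ⟨t, ht0, ht1, hbt⟩ : ∃ t, 0 ≤ t ∧ t ≤ 1 ∧ b = a * t :=
      ⟨b / a, div_nonneg hb h0.le, div_le_one_of_le₀ hba h0.le, by field_simp⟩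
    have hab : a + b = a * (1 + t) := by rw [hbt]; ring
    have hab' : a - b = a * (1 - t) := by rw [hbt]; ring
    have e1 : (a + b) ^ q = a ^ q * (1 + t) ^ q := by
      rw [hab, Real.mul_rpow h0.le (by linarith)]
    have e2 : (a - b) ^ q = a ^ q * (1 - t) ^ q := by
      rw [hab', Real.mul_rpow h0.le (by linarith)]
    have e3 : b ^ q = a ^ q * t ^ q := by
      rw [hbt, Real.mul_rpow h0.le ht0]
    have hapos : 0 < a ^ q := Real.rpow_pos_of_pos h0 q
    constructor
    · rcases eq_or_lt_of_le ht0 with ht | ht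
      · have hb0 : b = 0 := by rw [hbt, ← ht, mul_zero]
        simp only [hb0, add_zero, sub_zero, Real.zero_rpow hq0.ne']
        linarith
      · have := h_gt2 hq2 ht ht1
        rw [e1, e2, e3]
        nlinarith
    · intro hbp
      have ht : 0 < t := by
        rcases eq_or_lt_of_le ht0 with h | h
        · exfalso; rw [hbt, ← h, mul_zero] at hbp; exact lt_irrefl _ hbp
        · exact h
      have := h_gt2 hq2 ht ht1
      rw [e1, e2, e3]
      nlinarith

/-- reduce `|a+b|^q + |a-b|^q` to absolute values. -/
lemma E_abs_eq (q : ℝ) (a b : ℝ) :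
    |a + b| ^ q + |a - b| ^ q = |(|a| + |b|)| ^ q + |(|a| - |b|)| ^ q := by
  rcases le_or_gt 0 a with ha | ha <;> rcases le_or_gt 0 b with hb | hb
  · rw [abs_of_nonneg ha, abs_of_nonneg hb]
  · rw [abs_of_nonneg ha, abs_of_neg hb, show a + -b = a - b by ring,
      show a - -b = a + b by ring]
    ring
  · rw [abs_of_neg ha, abs_of_nonneg hb, show -a + b = -(a - b) by ring,
      show -a - b = -(a + b) by ring, abs_neg, abs_neg]
    ring
  · rw [abs_of_neg ha, abs_of_neg hb, show -a + -b = -(a + b) by ring,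
      show -a - -b = -(a - b) by ring, abs_neg, abs_neg]

/-- Lamperti inequality, `q < 2`. -/
lemma lam_lt2 (hq1 : 1 ≤ q) (hq2 : q < 2) (a b : ℝ) :
    |a + b| ^ q + |a - b| ^ q ≤ 2 * (|a| ^ q + |b| ^ q) ∧
      (a * b ≠ 0 → |a + b| ^ q + |a - b| ^ q < 2 * (|a| ^ q + |b| ^ q)) := by
  rw [E_abs_eq]
  rcases le_total |b| |a| with hba | hba
  · have h := core_lt2 hq1 hq2 (abs_nonneg b) hba
    rw [abs_of_nonneg (by positivity : (0:ℝ) ≤ |a| + |b|),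
      abs_of_nonneg (by linarith : (0:ℝ) ≤ |a| - |b|)]
    exact ⟨h.1, fun hab => h.2 (abs_pos.2 fun h0 => hab (by simp [h0]))⟩
  · have h := core_lt2 hq1 hq2 (abs_nonneg a) hba
    rw [abs_of_nonneg (by positivity : (0:ℝ) ≤ |a| + |b|),
      abs_sub_comm, abs_of_nonneg (by linarith : (0:ℝ) ≤ |b| - |a|),
      show |a| + |b| = |b| + |a| by ring]
    exact ⟨by linarith [h.1], fun hab => by
      have := h.2 (abs_pos.2 fun h0 => hab (by simp [h0]))
      linarith⟩

/-- Lamperti inequality, `q > 2`. -/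
lemma lam_gt2 (hq2 : 2 < q) (a b : ℝ) :
    2 * (|a| ^ q + |b| ^ q) ≤ |a + b| ^ q + |a - b| ^ q ∧
      (a * b ≠ 0 → 2 * (|a| ^ q + |b| ^ q) < |a + b| ^ q + |a - b| ^ q) := by
  rw [E_abs_eq]
  rcases le_total |b| |a| with hba | hba
  · have h := core_gt2 hq2 (abs_nonneg b) hba
    rw [abs_of_nonneg (by positivity : (0:ℝ) ≤ |a| + |b|),
      abs_of_nonneg (by linarith : (0:ℝ) ≤ |a| - |b|)]
    exact ⟨h.1, fun hab => h.2 (abs_pos.2 fun h0 => hab (by simp [h0]))⟩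
  · have h := core_gt2 hq2 (abs_nonneg a) hba
    rw [abs_of_nonneg (by positivity : (0:ℝ) ≤ |a| + |b|),
      abs_sub_comm, abs_of_nonneg (by linarith : (0:ℝ) ≤ |b| - |a|),
      show |a| + |b| = |b| + |a| by ring]
    exact ⟨by linarith [h.1], fun hab => by
      have := h.2 (abs_pos.2 fun h0 => hab (by simp [h0]))
      linarith⟩

instance inst_s16 : IsFiniteMeasure mu01 := by
  constructor
  rw [mu01, Measure.restrict_apply_univ, Real.volume_Ioo]
  norm_num

/-- `M^p = {f ∈ L^p(0,1) : ∫₀¹ f = 0}`. -/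
def Mp (p : ℝ≥0∞) [Fact (1 ≤ p)] : Set (Lp ℝ p mu01) :=
  {f : Lp ℝ p mu01 | ∫ t, (f : ℝ → ℝ) t ∂mu01 = 0}

section lp
variable {p : ℝ≥0∞} [Fact (1 ≤ p)]

lemma hp0 : p ≠ 0 := by
  have h := Fact.out (p := 1 ≤ p)
  intro h0; rw [h0] at h; exact absurd (le_antisymm h zero_le) one_ne_zero

lemma norm_rpow_integral (hptop : p ≠ ⊤) (f : Lp ℝ p mu01) :
    ‖f‖ ^ p.toReal = ∫ t, |(f : ℝ → ℝ) t| ^ p.toReal ∂mu01 := by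
  have hq0 : 0 < p.toReal := ENNReal.toReal_pos hp0 hptop
  have h := (Lp.memLp f).eLpNorm_eq_integral_rpow_norm hp0 hptop
  have hI : 0 ≤ ∫ t, ‖(f : ℝ → ℝ) t‖ ^ p.toReal ∂mu01 :=
    integral_nonneg fun t => Real.rpow_nonneg (norm_nonneg _) _
  rw [Lp.norm_def, h, ENNReal.toReal_ofReal (Real.rpow_nonneg hI _),
    ← Real.rpow_mul hI, inv_mul_cancel₀ hq0.ne', Real.rpow_one]
  exact integral_congr_ae (Filter.Eventually.of_forall fun t => by simp [Real.norm_eq_abs])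

lemma ae_disjoint_of_norm_eq (hptop : p ≠ ⊤) (hp2 : p ≠ 2) (n k : Lp ℝ p mu01)
    (h1 : ‖n + k‖ ^ p.toReal = ‖n‖ ^ p.toReal + ‖k‖ ^ p.toReal)
    (h2 : ‖n - k‖ ^ p.toReal = ‖n‖ ^ p.toReal + ‖k‖ ^ p.toReal) :
    ∀ᵐ t ∂mu01, (n : ℝ → ℝ) t * (k : ℝ → ℝ) t = 0 := by
  set q := p.toReal with hq
  have hq1 : 1 ≤ q := by
    rw [hq, ← ENNReal.toReal_one]
    exact ENNReal.toReal_mono hptop Fact.out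
  have hq2 : q ≠ 2 := by
    intro h
    exact hp2 ((ENNReal.toReal_eq_toReal_iff' hptop (by norm_num)).mp (by rw [← hq, h]; norm_num))
  have i_n : Integrable (fun t => |(n : ℝ → ℝ) t| ^ q) mu01 := by
    simpa [Real.norm_eq_abs] using (Lp.memLp n).integrable_norm_rpow hp0 hptop
  have i_k : Integrable (fun t => |(k : ℝ → ℝ) t| ^ q) mu01 := by
    simpa [Real.norm_eq_abs] using (Lp.memLp k).integrable_norm_rpow hp0 hptop
  have i_add : Integrable (fun t => |(n : ℝ → ℝ) t + (k : ℝ → ℝ) t| ^ q) mu01 := by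
    refine ((Lp.memLp (n + k)).integrable_norm_rpow hp0 hptop).congr ?_
    filter_upwards [Lp.coeFn_add n k] with t ht
    rw [ht]; simp [Real.norm_eq_abs]; rfl
  have i_sub : Integrable (fun t => |(n : ℝ → ℝ) t - (k : ℝ → ℝ) t| ^ q) mu01 := by
    refine ((Lp.memLp (n - k)).integrable_norm_rpow hp0 hptop).congr ?_
    filter_upwards [Lp.coeFn_sub n k] with t ht
    rw [ht]; simp [Real.norm_eq_abs]; rfl
  have eadd : ∫ t, |(n : ℝ → ℝ) t + (k : ℝ → ℝ) t| ^ q ∂mu01 = ‖n + k‖ ^ q := by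
    rw [norm_rpow_integral hptop (n + k)]
    refine integral_congr_ae ?_
    filter_upwards [Lp.coeFn_add n k] with t ht
    rw [ht]; simp; rfl
  have esub : ∫ t, |(n : ℝ → ℝ) t - (k : ℝ → ℝ) t| ^ q ∂mu01 = ‖n - k‖ ^ q := by
    rw [norm_rpow_integral hptop (n - k)]
    refine integral_congr_ae ?_
    filter_upwards [Lp.coeFn_sub n k] with t ht
    rw [ht]; simp; rfl
  have hsum : ∫ t, (2 * (|(n : ℝ → ℝ) t| ^ q + |(k : ℝ → ℝ) t| ^ q)
      - |(n : ℝ → ℝ) t + (k : ℝ → ℝ) t| ^ q - |(n : ℝ → ℝ) t - (k : ℝ → ℝ) t| ^ q) ∂mu01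
      = 0 := by
    have h₀ : Integrable (fun t => 2 * (|(n : ℝ → ℝ) t| ^ q + |(k : ℝ → ℝ) t| ^ q)) mu01 :=
      (i_n.add i_k).const_mul 2
    have h₁ : Integrable (fun t => 2 * (|(n : ℝ → ℝ) t| ^ q + |(k : ℝ → ℝ) t| ^ q)
        - |(n : ℝ → ℝ) t + (k : ℝ → ℝ) t| ^ q) mu01 := h₀.sub i_add
    rw [integral_sub h₁ i_sub, integral_sub h₀ i_add, MeasureTheory.integral_const_mul,
      integral_add i_n i_k, eadd, esub, ← norm_rpow_integral hptop n,
      ← norm_rpow_integral hptop k]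
    rw [← hq]
    linarith
  have hint : Integrable (fun t => (2 * (|(n : ℝ → ℝ) t| ^ q + |(k : ℝ → ℝ) t| ^ q)
      - |(n : ℝ → ℝ) t + (k : ℝ → ℝ) t| ^ q - |(n : ℝ → ℝ) t - (k : ℝ → ℝ) t| ^ q)) mu01 :=
    (((i_n.add i_k).const_mul 2).sub i_add).sub i_sub
  rcases lt_or_gt_of_ne hq2 with hlt | hgt
  · have hnn : 0 ≤ᵐ[mu01] (fun t => (2 * (|(n : ℝ → ℝ) t| ^ q + |(k : ℝ → ℝ) t| ^ q)
        - |(n : ℝ → ℝ) t + (k : ℝ → ℝ) t| ^ q - |(n : ℝ → ℝ) t - (k : ℝ → ℝ) t| ^ q)) :=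
      Filter.Eventually.of_forall fun t => by
        have := (lam_lt2 hq1 hlt ((n : ℝ → ℝ) t) ((k : ℝ → ℝ) t)).1
        simp only [Pi.zero_apply]; linarith
    have hz := (integral_eq_zero_iff_of_nonneg_ae hnn hint).mp hsum
    filter_upwards [hz] with t ht
    simp only [Pi.zero_apply] at ht
    by_contra hne
    have := (lam_lt2 hq1 hlt ((n : ℝ → ℝ) t) ((k : ℝ → ℝ) t)).2 hne
    linarith
  · have hnn : 0 ≤ᵐ[mu01] (fun t => -(2 * (|(n : ℝ → ℝ) t| ^ q + |(k : ℝ → ℝ) t| ^ q)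
        - |(n : ℝ → ℝ) t + (k : ℝ → ℝ) t| ^ q - |(n : ℝ → ℝ) t - (k : ℝ → ℝ) t| ^ q)) :=
      Filter.Eventually.of_forall fun t => by
        have := (lam_gt2 hgt ((n : ℝ → ℝ) t) ((k : ℝ → ℝ) t)).1
        simp only [Pi.zero_apply]; linarith
    have hsum' : ∫ t, -(2 * (|(n : ℝ → ℝ) t| ^ q + |(k : ℝ → ℝ) t| ^ q)
        - |(n : ℝ → ℝ) t + (k : ℝ → ℝ) t| ^ q - |(n : ℝ → ℝ) t - (k : ℝ → ℝ) t| ^ q) ∂mu01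
        = 0 := by rw [integral_neg, hsum, neg_zero]
    have hz := (integral_eq_zero_iff_of_nonneg_ae hnn hint.neg).mp hsum'
    filter_upwards [hz] with t ht
    simp only [Pi.zero_apply, neg_eq_zero] at ht
    by_contra hne
    have := (lam_gt2 hgt ((n : ℝ → ℝ) t) ((k : ℝ → ℝ) t)).2 hne
    linarith

end lp

lemma no_decomp (p : ℝ≥0∞) [Fact (1 ≤ p)] (hp2 : p ≠ 2) (hptop : p ≠ ⊤) :
    ¬ ∃ N K : Submodule ℝ (Lp ℝ p mu01),
        N ≠ ⊥ ∧ K ≠ ⊥ ∧ IsClosed (N : Set (Lp ℝ p mu01)) ∧ IsClosed (K : Set (Lp ℝ p mu01)) ∧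
        (N : Set (Lp ℝ p mu01)) ⊆ Mp p ∧ (K : Set (Lp ℝ p mu01)) ⊆ Mp p ∧
        (∀ f ∈ Mp p, ∃ n ∈ N, ∃ k ∈ K, f = n + k) ∧
        (∀ n ∈ N, ∀ k ∈ K, ‖n + k‖ ^ p.toReal = ‖n‖ ^ p.toReal + ‖k‖ ^ p.toReal) := by
  rintro ⟨N, K, hN, hK, -, -, hNM, hKM, hspan, hnorm⟩
  obtain ⟨n₀, hn₀N, hn₀⟩ := (Submodule.ne_bot_iff N).mp hN
  obtain ⟨k₀, hk₀K, hk₀⟩ := (Submodule.ne_bot_iff K).mp hK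
  have hdisj : ∀ n ∈ N, ∀ k ∈ K, ∀ᵐ t ∂mu01, (n : ℝ → ℝ) t * (k : ℝ → ℝ) t = 0 := by
    intro n hn k hk
    refine ae_disjoint_of_norm_eq hptop hp2 n k (hnorm n hn k hk) ?_
    have := hnorm n hn (-k) (K.neg_mem hk)
    rwa [← sub_eq_add_neg, norm_neg] at this
  set A := {t : ℝ | (n₀ : ℝ → ℝ) t ≠ 0} with hA
  set B := {t : ℝ | (k₀ : ℝ → ℝ) t ≠ 0} with hB
  have hmA : MeasurableSet A :=
    (Lp.stronglyMeasurable n₀).measurable (measurableSet_singleton 0) |>.compl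
  have hmB : MeasurableSet B :=
    (Lp.stronglyMeasurable k₀).measurable (measurableSet_singleton 0) |>.compl
  have hApos : mu01 A ≠ 0 := by
    intro h0
    apply hn₀
    rw [Lp.eq_zero_iff_ae_eq_zero]
    filter_upwards [measure_eq_zero_iff_ae_notMem.mp h0] with t ht
    simpa [hA] using ht
  have hBpos : mu01 B ≠ 0 := by
    intro h0
    apply hk₀
    rw [Lp.eq_zero_iff_ae_eq_zero]
    filter_upwards [measure_eq_zero_iff_ae_notMem.mp h0] with t ht
    simpa [hB] using ht
  have hfinA : mu01 A ≠ ⊤ := measure_ne_top mu01 A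
  have hfinB : mu01 B ≠ ⊤ := measure_ne_top mu01 B
  have hAB : mu01 (A ∩ B) = 0 := by
    have hd := hdisj n₀ hn₀N k₀ hk₀K
    refine measure_mono_null ?_ (ae_iff.mp hd)
    rintro t ⟨htA, htB⟩
    exact mul_ne_zero htA htB
  set c : ℝ := (mu01 B).toReal with hc
  set d : ℝ := (mu01 A).toReal with hd
  set f : Lp ℝ p mu01 :=
    c • indicatorConstLp p hmA hfinA (1 : ℝ) - d • indicatorConstLp p hmB hfinB (1 : ℝ)
    with hf
  have hfcoe : (f : ℝ → ℝ) =ᵐ[mu01]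
      fun t => c * A.indicator (fun _ => (1:ℝ)) t - d * B.indicator (fun _ => (1:ℝ)) t := by
    filter_upwards [Lp.coeFn_sub (c • indicatorConstLp p hmA hfinA (1 : ℝ))
        (d • indicatorConstLp p hmB hfinB (1 : ℝ)),
      Lp.coeFn_smul c (indicatorConstLp p hmA hfinA (1 : ℝ)),
      Lp.coeFn_smul d (indicatorConstLp p hmB hfinB (1 : ℝ)),
      indicatorConstLp_coeFn (p := p) (μ := mu01) (hs := hmA) (hμs := hfinA) (c := (1:ℝ)),
      indicatorConstLp_coeFn (p := p) (μ := mu01) (hs := hmB) (hμs := hfinB) (c := (1:ℝ))]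
      with t h1 h2 h3 h4 h5
    rw [hf]
    rw [h1, Pi.sub_apply, h2, h3, Pi.smul_apply, Pi.smul_apply, h4, h5, smul_eq_mul, smul_eq_mul]
  have hiA : Integrable (A.indicator fun _ => (1:ℝ)) mu01 := (integrable_const 1).indicator hmA
  have hiB : Integrable (B.indicator fun _ => (1:ℝ)) mu01 := (integrable_const 1).indicator hmB
  have hfMp : f ∈ Mp p := by
    show ∫ t, (f : ℝ → ℝ) t ∂mu01 = 0
    rw [integral_congr_ae hfcoe, integral_sub (hiA.const_mul c) (hiB.const_mul d),
      MeasureTheory.integral_const_mul, MeasureTheory.integral_const_mul,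
      integral_indicator_const (1:ℝ) hmA, integral_indicator_const (1:ℝ) hmB]
    simp [hc, hd, Measure.real]; ring
  obtain ⟨nn, hnnN, kk, hkkK, heq⟩ := hspan f hfMp
  have hfadd : (f : ℝ → ℝ) =ᵐ[mu01] fun t => (nn : ℝ → ℝ) t + (kk : ℝ → ℝ) t := by
    rw [heq]; exact Lp.coeFn_add nn kk
  have hn_eq : (nn : ℝ → ℝ) =ᵐ[mu01] A.indicator (fun _ => c) := by
    filter_upwards [hdisj nn hnnN kk hkkK, hdisj nn hnnN k₀ hk₀K, hdisj n₀ hn₀N kk hkkK,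
      measure_eq_zero_iff_ae_notMem.mp hAB, hfadd, hfcoe] with t e1 e2 e3 e4 e5 e6
    by_cases htA : t ∈ A
    · have htB : t ∉ B := fun hBt => e4 ⟨htA, hBt⟩
      have hk0 : (kk : ℝ → ℝ) t = 0 := by
        rcases mul_eq_zero.mp e3 with h | h
        · exact absurd h htA
        · exact h
      have hfv : (f : ℝ → ℝ) t = c := by
        rw [e6, Set.indicator_of_mem htA, Set.indicator_of_notMem htB]; ring
      rw [Set.indicator_of_mem htA]
      have := e5; rw [hfv] at this
      linarith [this, hk0]
    · rw [Set.indicator_of_notMem htA]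
      by_cases htB : t ∈ B
      · rcases mul_eq_zero.mp e2 with h | h
        · exact h
        · exact absurd h htB
      · have hfv : (f : ℝ → ℝ) t = 0 := by
          rw [e6, Set.indicator_of_notMem htA, Set.indicator_of_notMem htB]; ring
        have hsum : (nn : ℝ → ℝ) t + (kk : ℝ → ℝ) t = 0 := by rw [← e5, hfv]
        rcases mul_eq_zero.mp e1 with h | h
        · exact h
        · rw [h] at hsum; linarith
  have hintn : ∫ t, (nn : ℝ → ℝ) t ∂mu01 = d * c := by
    rw [integral_congr_ae hn_eq, integral_indicator_const c hmA, smul_eq_mul, hd]; rfl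
  have hzero : ∫ t, (nn : ℝ → ℝ) t ∂mu01 = 0 := hNM hnnN
  have hcpos : 0 < c := ENNReal.toReal_pos hBpos hfinB
  have hdpos : 0 < d := ENNReal.toReal_pos hApos hfinA
  rw [hzero] at hintn
  nlinarith

/-- For `1 ≤ p < ∞`, `p ≠ 2`, the hyperplane `M^p` admits no `ℓ^p`-direct sum decomposition
`M^p = N ⊕_p K` into two nonzero closed subspaces; in particular it is not isometric to
`N ⊕_p L^p` for any nonzero `N`. -/
theorem stmt_16 (p : ℝ≥0∞) [Fact (1 ≤ p)] (hp2 : p ≠ 2) (hptop : p ≠ ⊤) :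
    (¬ ∃ N K : Submodule ℝ (Lp ℝ p mu01),
        N ≠ ⊥ ∧ K ≠ ⊥ ∧ IsClosed (N : Set (Lp ℝ p mu01)) ∧ IsClosed (K : Set (Lp ℝ p mu01)) ∧
        (N : Set (Lp ℝ p mu01)) ⊆ Mp p ∧ (K : Set (Lp ℝ p mu01)) ⊆ Mp p ∧
        (∀ f ∈ Mp p, ∃ n ∈ N, ∃ k ∈ K, f = n + k) ∧
        (∀ n ∈ N, ∀ k ∈ K, ‖n + k‖ ^ p.toReal = ‖n‖ ^ p.toReal + ‖k‖ ^ p.toReal)) ∧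
    (¬ ∃ N K : Submodule ℝ (Lp ℝ p mu01),
        N ≠ ⊥ ∧ IsClosed (N : Set (Lp ℝ p mu01)) ∧ IsClosed (K : Set (Lp ℝ p mu01)) ∧
        (N : Set (Lp ℝ p mu01)) ⊆ Mp p ∧ (K : Set (Lp ℝ p mu01)) ⊆ Mp p ∧
        (∀ f ∈ Mp p, ∃ n ∈ N, ∃ k ∈ K, f = n + k) ∧
        (∀ n ∈ N, ∀ k ∈ K, ‖n + k‖ ^ p.toReal = ‖n‖ ^ p.toReal + ‖k‖ ^ p.toReal) ∧
        Nonempty (K ≃ₗᵢ[ℝ] Lp ℝ p mu01)) := by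
  constructor
  · exact no_decomp p hp2 hptop
  · rintro ⟨N, K, hN, hcN, hcK, hNM, hKM, hspan, hnorm, ⟨e⟩⟩
    have hK : K ≠ ⊥ := by
      intro hbot
      -- Lp is nontrivial: the constant function 1 is a nonzero element
      have hmU : MeasurableSet (Set.univ : Set ℝ) := MeasurableSet.univ
      have hfinU : mu01 Set.univ ≠ ⊤ := measure_ne_top _ _
      have hU : mu01 Set.univ ≠ 0 := by
        rw [mu01, Measure.restrict_apply_univ, Real.volume_Ioo]
        norm_num
      have hne : indicatorConstLp p hmU hfinU (1:ℝ) ≠ 0 := by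
        intro h0
        rw [Lp.eq_zero_iff_ae_eq_zero] at h0
        have h1 : ∀ᵐ t ∂mu01, Set.univ.indicator (fun _ => (1:ℝ)) t = 0 := by
          filter_upwards [indicatorConstLp_coeFn (p := p) (μ := mu01) (hs := hmU)
            (hμs := hfinU) (c := (1:ℝ)), h0] with t h h'
          rw [← h]; exact h'
        have h2 : ∀ᵐ t ∂mu01, False := by
          filter_upwards [h1] with t ht
          simpa using ht
        have h3 := ae_iff.mp h2
        simp only [not_false_iff, Set.setOf_true] at h3
        exact hU h3
      -- K = ⊥ means all of K is zero, contradicting K ≃ Lp nontrivial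
      have hmem := (le_of_eq hbot) (e.symm (indicatorConstLp p hmU hfinU (1:ℝ))).2
      rw [Submodule.mem_bot] at hmem
      have hz : e.symm (indicatorConstLp p hmU hfinU (1:ℝ)) = 0 := Subtype.ext (by simpa using hmem)
      have : indicatorConstLp p hmU hfinU (1:ℝ) = (0 : Lp ℝ p mu01) := by
        have := congrArg e hz
        rwa [LinearIsometryEquiv.apply_symm_apply, map_zero] at this
      exact hne this
    exact no_decomp p hp2 hptop ⟨N, K, hN, hK, hcN, hcK, hNM, hKM, hspan, hnorm⟩
end

section
/- Let (X,‖·‖) be an asymptotically transitive normed space and |||·||| any norm on X such that for every ε > 0 there is δ > 0 with: every linear automorphism T of (X,‖·‖) satisfying max(‖T‖,‖T⁻¹‖) ≤ 1+δ also satisfies max(|||T|||,|||T⁻¹|||) ≤ 1+ε. Then |||·||| = c‖·‖ for some constant c > 0. -/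
/-!
Transport along almost isometries: given unit vectors `x, y` and `ε > 0`, asymptotic transitivity
yields an automorphism `T` with `T x = y` that is close enough to an isometry of `‖·‖` to satisfy
`n (T z) ≤ (1 + ε) n z`, so `n y ≤ (1 + ε) n x`. Letting `ε → 0` and exchanging `x` and `y`, `n` is
constant on the unit sphere, and homogeneity spreads this constant to all of `X`.
-/

open Filter Topology

lemma le_of_forall_pos_le_one_add_mul {a b : ℝ} (h : ∀ ε > 0, a ≤ (1 + ε) * b) : a ≤ b := by
  have hlim : Tendsto (fun ε : ℝ => (1 + ε) * b) (𝓝[>] 0) (𝓝 b) := by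
    have : Continuous fun ε : ℝ => (1 + ε) * b := by fun_prop
    simpa using this.continuousWithinAt.tendsto (x := 0) (s := Set.Ioi 0)
  exact ge_of_tendsto hlim (eventually_nhdsWithin_of_forall h)

lemma eq_mul_norm_of_forall_norm_eq_one {X : Type*} [NormedAddCommGroup X] [NormedSpace ℝ X]
    {n : X → ℝ} (hn_smul : ∀ (a : ℝ) (x : X), n (a • x) = |a| * n x) {c : ℝ}
    (hc : ∀ x : X, ‖x‖ = 1 → n x = c) (x : X) : n x = c * ‖x‖ := by
  rcases eq_or_ne x 0 with rfl | hx
  · simpa using hn_smul 0 0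
  · have hx_unit : ‖(‖x‖⁻¹ : ℝ) • x‖ = 1 := norm_smul_inv_norm hx
    calc n x = n (‖x‖ • (‖x‖⁻¹ : ℝ) • x) := by rw [smul_inv_smul₀ (norm_ne_zero_iff.mpr hx)]
      _ = c * ‖x‖ := by rw [hn_smul, hc _ hx_unit, abs_norm, mul_comm]

theorem stmt_18 {X : Type*} [NormedAddCommGroup X] [NormedSpace ℝ X]
    (n : X → ℝ)
    (hn_add : ∀ x y : X, n (x + y) ≤ n x + n y)
    (hn_smul : ∀ (a : ℝ) (x : X), n (a • x) = |a| * n x)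
    (hn_zero : ∀ x : X, n x = 0 ↔ x = 0)
    (hAT : ∀ x y : X, ‖x‖ = 1 → ‖y‖ = 1 → ∀ δ > 0, ∃ T : X ≃L[ℝ] X,
      T x = y ∧ ‖(T : X →L[ℝ] X)‖ ≤ 1 + δ ∧ ‖(T.symm : X →L[ℝ] X)‖ ≤ 1 + δ)
    (hcomp : ∀ ε > 0, ∃ δ > 0, ∀ T : X ≃L[ℝ] X,
      ‖(T : X →L[ℝ] X)‖ ≤ 1 + δ → ‖(T.symm : X →L[ℝ] X)‖ ≤ 1 + δ →
        (∀ x : X, n (T x) ≤ (1 + ε) * n x) ∧ (∀ x : X, n (T.symm x) ≤ (1 + ε) * n x)) :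
    ∃ c > 0, ∀ x : X, n x = c * ‖x‖ := by
  let p : Seminorm ℝ X := Seminorm.of n hn_add (by simpa only [Real.norm_eq_abs] using hn_smul)
  have sphere_le : ∀ x y : X, ‖x‖ = 1 → ‖y‖ = 1 → n y ≤ n x := by
    refine fun x y hx hy => le_of_forall_pos_le_one_add_mul fun ε hε => ?_
    obtain ⟨δ, hδ, hT_le⟩ := hcomp ε hε
    obtain ⟨T, hTxy, hT, hT_symm⟩ := hAT x y hx hy δ hδ
    simpa only [hTxy] using (hT_le T hT hT_symm).1 x
  rcases subsingleton_or_nontrivial X with hX | hX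
  · exact ⟨1, one_pos, fun x => by simpa [Subsingleton.elim x 0] using hn_smul 0 0⟩
  obtain ⟨u, hu⟩ := exists_norm_eq X zero_le_one
  have hu0 : u ≠ 0 := norm_ne_zero_iff.mp (hu ▸ one_ne_zero)
  refine ⟨n u, (apply_nonneg p u).lt_of_ne' ((hn_zero u).not.mpr hu0), ?_⟩
  exact eq_mul_norm_of_forall_norm_eq_one hn_smul fun y hy =>
    le_antisymm (sphere_le u y hu hy) (sphere_le y u hy hu)
end
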